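/- arXiv:0803.3558 — 5 statements merged into one kernel-verified Lean document; each statement's English description precedes it below -/
import Mathlib

section
/- Let (X₀, X₁) be a regular Banach couple. Then (X₀^#, X₁^#) is a Banach couple (both spaces embed continuously into (X₀ ∩ X₁)*), and (X₀ ∩ X₁)^# coincides isometrically with X₀^# + X₁^#, where X₀^# + X₁^# carries the norm ‖y‖ = inf{‖y₀‖_{X₀^#} + ‖y₁‖_{X₁^#} : y = y₀ + y₁}. -/
open Complex Set

variable {V : Type*} [AddCommGroup V] [Module ℂ V]

/-- `n` is (the restriction to the intersection `X₀ ∩ X₁` of) a norm. A regular Banach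
couple is determined (up to isomorphism) by the vector space `X₀ ∩ X₁` together with the
restrictions of the two norms, the spaces `X₀`, `X₁` being the respective completions. -/
def IsNormC (n : V → ℝ) : Prop :=
  (∀ x, 0 ≤ n x) ∧ (∀ x, n x = 0 ↔ x = 0) ∧
  (∀ (c : ℂ) (x : V), n (c • x) = ‖c‖ * n x) ∧ (∀ x y, n (x + y) ≤ n x + n y)

/-- the norm of `X₀ ∩ X₁`. -/
noncomputable def interNorm (n0 n1 : V → ℝ) (x : V) : ℝ := max (n0 x) (n1 x)

/-- the norm of `X₀ + X₁`, restricted to `X₀ ∩ X₁` (for `x ∈ X₀ ∩ X₁` every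
decomposition `x = x₀ + x₁` with `xⱼ ∈ Xⱼ` automatically has `x₀, x₁ ∈ X₀ ∩ X₁`). -/
noncomputable def sumNorm (n0 n1 : V → ℝ) (x : V) : ℝ :=
  sInf {r | ∃ x0 x1 : V, x = x0 + x1 ∧ r = n0 x0 + n1 x1}

/-- `y` belongs to `X^#`, where `n` is the restriction of the norm of `X` to `X₀ ∩ X₁`. -/
def IsDualBounded (n : V → ℝ) (y : V →ₗ[ℂ] ℂ) : Prop := ∃ C : ℝ, ∀ x, ‖y x‖ ≤ C * n x

/-- the norm `‖y‖_{X^#} = sup {|⟨x,y⟩| : x ∈ X₀ ∩ X₁, ‖x‖_X ≤ 1}`. -/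
noncomputable def dualNorm (n : V → ℝ) (y : V →ₗ[ℂ] ℂ) : ℝ :=
  sSup {r | ∃ x, n x ≤ 1 ∧ r = ‖y x‖}

/-- `nX` is the restriction to `X₀ ∩ X₁` of the norm of an intermediate space `X`
(i.e. `X₀ ∩ X₁ ⊂ X ⊂ X₀ + X₁` with continuous inclusions); for a *regular* intermediate
space, `X` is the completion of `X₀ ∩ X₁` for this norm. -/
def IsIntermediateNorm (n0 n1 nX : V → ℝ) : Prop :=
  (∃ C > 0, ∀ x, nX x ≤ C * interNorm n0 n1 x) ∧
  (∃ C > 0, ∀ x, sumNorm n0 n1 x ≤ C * nX x)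

/-!
Dualising the diagonal embedding `x ↦ (x, x)` of `X₀ ∩ X₁` into `X₀ ⊕_∞ X₁`: a functional `y`
with `‖y x‖ ≤ D · max (‖x‖₀, ‖x‖₁)` extends by Hahn–Banach from the diagonal to a functional `g`
on `X₀ × X₁` bounded by `D · max (‖u‖₀, ‖v‖₁)`, and `y₀ = g (·, 0)`, `y₁ = g (0, ·)` split
`y = y₀ + y₁`. Aligning the phases of `y₀ u` and `y₁ v` shows `‖y₀‖ + ‖y₁‖ ≤ D`, while the
reverse inequality for any splitting is the triangle inequality.
-/

open scoped NNReal

theorem IsNormC.exists_seminorm {n : V → ℝ} (hn : IsNormC n) : ∃ p : Seminorm ℂ V, ⇑p = n :=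
  ⟨Seminorm.of n hn.2.2.2 hn.2.2.1, rfl⟩

theorem interNorm_eq_sup (p q : Seminorm ℂ V) : interNorm p q = ⇑(p ⊔ q) := rfl

theorem Complex.exists_norm_eq_one_mul_eq_norm (z : ℂ) : ∃ c : ℂ, ‖c‖ = 1 ∧ c * z = ‖z‖ := by
  rcases eq_or_ne z 0 with rfl | hz
  · exact ⟨1, by simp, by simp⟩
  · refine ⟨‖z‖ / z, ?_, div_mul_cancel₀ _ hz⟩
    rw [norm_div, Complex.norm_real, norm_norm, div_self (norm_ne_zero_iff.2 hz)]

section DualNorm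

variable {p q : Seminorm ℂ V} {y y0 y1 : V →ₗ[ℂ] ℂ}

theorem dualNorm_nonneg (p : Seminorm ℂ V) (y : V →ₗ[ℂ] ℂ) : 0 ≤ dualNorm p y :=
  Real.sSup_nonneg <| by rintro r ⟨x, -, rfl⟩; exact norm_nonneg _

theorem dualNorm_le {C : ℝ} (h : ∀ x, p x ≤ 1 → ‖y x‖ ≤ C) : dualNorm p y ≤ C :=
  csSup_le ⟨0, 0, by simp, by simp⟩ <| by rintro r ⟨x, hx, rfl⟩; exact h x hx

theorem dualNorm_le_of_bound {C : ℝ} (hC : 0 ≤ C) (h : ∀ x, ‖y x‖ ≤ C * p x) :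
    dualNorm p y ≤ C :=
  dualNorm_le fun x hx => (h x).trans (mul_le_of_le_one_right hC hx)

theorem norm_le_dualNorm (hy : IsDualBounded p y) {x : V} (hx : p x ≤ 1) :
    ‖y x‖ ≤ dualNorm p y := by
  obtain ⟨C, hC⟩ := hy
  refine le_csSup ⟨max C 0, ?_⟩ ⟨x, hx, rfl⟩
  rintro r ⟨x, hx, rfl⟩
  calc ‖y x‖ ≤ C * p x := hC x
    _ ≤ max C 0 * p x := by gcongr; exact le_max_left _ _
    _ ≤ max C 0 := mul_le_of_le_one_right (le_max_right _ _) hx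

theorem norm_le_dualNorm_mul (hy : IsDualBounded p y) (x : V) :
    ‖y x‖ ≤ dualNorm p y * p x := by
  rcases (apply_nonneg p x).eq_or_lt with h0 | hpos
  · obtain ⟨C, hC⟩ := hy
    simpa [← h0] using hC x
  · have hunit : p ((p x : ℂ)⁻¹ • x) = 1 := by
      rw [map_smul_eq_mul, norm_inv, Complex.norm_of_nonneg hpos.le, inv_mul_cancel₀ hpos.ne']
    have := norm_le_dualNorm hy hunit.le
    rw [map_smul, smul_eq_mul, norm_mul, norm_inv, Complex.norm_of_nonneg hpos.le,
      inv_mul_le_iff₀ hpos] at this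
    linarith

theorem IsDualBounded.mono (hpq : p ≤ q) (hy : IsDualBounded p y) : IsDualBounded q y :=
  ⟨dualNorm p y, fun x =>
    (norm_le_dualNorm_mul hy x).trans (by gcongr; exacts [dualNorm_nonneg p y, hpq x])⟩

theorem dualNorm_anti (hpq : p ≤ q) (hy : IsDualBounded p y) : dualNorm q y ≤ dualNorm p y :=
  dualNorm_le_of_bound (dualNorm_nonneg p y) fun x =>
    (norm_le_dualNorm_mul hy x).trans (by gcongr; exacts [dualNorm_nonneg p y, hpq x])

theorem exists_add_eq_of_norm_le_sup (D : ℝ≥0) (hy : ∀ x, ‖y x‖ ≤ D * (p x ⊔ q x)) :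
    ∃ y0 y1 : V →ₗ[ℂ] ℂ, y = y0 + y1 ∧ ∀ u v, ‖y0 u + y1 v‖ ≤ D * (p u ⊔ q v) := by
  let N : Seminorm ℂ (V × V) := D • (p.comp (LinearMap.fst ℂ V V) ⊔ q.comp (LinearMap.snd ℂ V V))
  have hN : ∀ u v, N (u, v) = D * (p u ⊔ q v) := fun u v => rfl
  let diagonal := LinearMap.range (LinearMap.prod LinearMap.id LinearMap.id : V →ₗ[ℂ] V × V)
  obtain ⟨g, hg, hgN⟩ := Module.Dual.exists_extension_of_le_seminorm diagonal
    ((y ∘ₗ LinearMap.fst ℂ V V).domRestrict diagonal) (p := N) <| by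
      rintro ⟨_, x, rfl⟩
      simpa [hN] using hy x
  refine ⟨g ∘ₗ LinearMap.inl ℂ V V, g ∘ₗ LinearMap.inr ℂ V V, ?_, fun u v => ?_⟩
  · ext x
    have := hg ⟨(x, x), x, rfl⟩
    simp only [LinearMap.domRestrict_apply, LinearMap.comp_apply, LinearMap.fst_apply] at this
    rw [← this, LinearMap.add_apply, LinearMap.comp_apply, LinearMap.comp_apply, ← map_add,
      LinearMap.inl_apply, LinearMap.inr_apply, Prod.mk_add_mk, add_zero, zero_add]
  · rw [LinearMap.comp_apply, LinearMap.comp_apply, ← map_add, LinearMap.inl_apply,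
      LinearMap.inr_apply, Prod.mk_add_mk, add_zero, zero_add, ← hN]
    exact hgN (u, v)

theorem dualNorm_add_dualNorm_le {D : ℝ} (hD : 0 ≤ D)
    (h : ∀ u v, ‖y0 u + y1 v‖ ≤ D * (p u ⊔ q v)) : dualNorm p y0 + dualNorm q y1 ≤ D := by
  have hsum : ∀ u v, p u ≤ 1 → q v ≤ 1 → ‖y0 u‖ + ‖y1 v‖ ≤ D := by
    intro u v hu hv
    obtain ⟨c0, hc0, hc0u⟩ := Complex.exists_norm_eq_one_mul_eq_norm (y0 u)
    obtain ⟨c1, hc1, hc1v⟩ := Complex.exists_norm_eq_one_mul_eq_norm (y1 v)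
    calc ‖y0 u‖ + ‖y1 v‖ = ‖y0 (c0 • u) + y1 (c1 • v)‖ := by
          rw [map_smul, map_smul, smul_eq_mul, smul_eq_mul, hc0u, hc1v, ← Complex.ofReal_add,
            Complex.norm_of_nonneg (by positivity)]
      _ ≤ D * (p (c0 • u) ⊔ q (c1 • v)) := h _ _
      _ = D * (p u ⊔ q v) := by rw [map_smul_eq_mul, map_smul_eq_mul, hc0, hc1, one_mul, one_mul]
      _ ≤ D := mul_le_of_le_one_right hD (sup_le hu hv)
  have : dualNorm q y1 ≤ D - dualNorm p y0 := dualNorm_le fun v hv => by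
    have : dualNorm p y0 ≤ D - ‖y1 v‖ := dualNorm_le fun u hu => by
      linarith [hsum u v hu hv]
    linarith
  linarith

theorem norm_add_le_dualNorm_add_mul_sup (h0 : IsDualBounded p y0) (h1 : IsDualBounded q y1)
    (x : V) : ‖(y0 + y1) x‖ ≤ (dualNorm p y0 + dualNorm q y1) * (p ⊔ q) x := by
  have := dualNorm_nonneg p y0
  have := dualNorm_nonneg q y1
  calc ‖(y0 + y1) x‖ ≤ ‖y0 x‖ + ‖y1 x‖ := norm_add_le _ _
    _ ≤ dualNorm p y0 * p x + dualNorm q y1 * q x :=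
        add_le_add (norm_le_dualNorm_mul h0 x) (norm_le_dualNorm_mul h1 x)
    _ ≤ dualNorm p y0 * (p ⊔ q) x + dualNorm q y1 * (p ⊔ q) x := by
        gcongr
        exacts [le_sup_left, le_sup_right]
    _ = (dualNorm p y0 + dualNorm q y1) * (p ⊔ q) x := (add_mul _ _ _).symm

theorem IsDualBounded.add_sup (h0 : IsDualBounded p y0) (h1 : IsDualBounded q y1) :
    IsDualBounded ⇑(p ⊔ q) (y0 + y1) :=
  ⟨_, norm_add_le_dualNorm_add_mul_sup h0 h1⟩

theorem dualNorm_sup_add_le (h0 : IsDualBounded p y0) (h1 : IsDualBounded q y1) :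
    dualNorm ⇑(p ⊔ q) (y0 + y1) ≤ dualNorm p y0 + dualNorm q y1 :=
  dualNorm_le_of_bound (add_nonneg (dualNorm_nonneg p y0) (dualNorm_nonneg q y1))
    (norm_add_le_dualNorm_add_mul_sup h0 h1)

theorem exists_add_eq_and_dualNorm_sup_eq (hy : IsDualBounded ⇑(p ⊔ q) y) :
    ∃ y0 y1 : V →ₗ[ℂ] ℂ, y = y0 + y1 ∧ IsDualBounded p y0 ∧ IsDualBounded q y1 ∧
      dualNorm ⇑(p ⊔ q) y = dualNorm p y0 + dualNorm q y1 := by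
  set D : ℝ≥0 := ⟨dualNorm ⇑(p ⊔ q) y, dualNorm_nonneg _ y⟩
  obtain ⟨y0, y1, rfl, h⟩ := exists_add_eq_of_norm_le_sup D (norm_le_dualNorm_mul hy)
  have h0 : IsDualBounded p y0 := ⟨D, fun u => by simpa using h u 0⟩
  have h1 : IsDualBounded q y1 := ⟨D, fun v => by simpa using h 0 v⟩
  exact ⟨y0, y1, rfl, h0, h1, le_antisymm (dualNorm_sup_add_le h0 h1)
    (dualNorm_add_dualNorm_le D.2 h)⟩

theorem isLeast_dualNorm_sup (hy : IsDualBounded ⇑(p ⊔ q) y) :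
    IsLeast {r | ∃ y0 y1 : V →ₗ[ℂ] ℂ, y = y0 + y1 ∧ IsDualBounded p y0 ∧
      IsDualBounded q y1 ∧ r = dualNorm p y0 + dualNorm q y1} (dualNorm ⇑(p ⊔ q) y) := by
  refine ⟨exists_add_eq_and_dualNorm_sup_eq hy, ?_⟩
  rintro r ⟨y0, y1, rfl, h0, h1, rfl⟩
  exact dualNorm_sup_add_le h0 h1

end DualNorm

/-- Fact `sumq`: for a regular Banach couple `(X₀, X₁)`, the pair `(X₀^#, X₁^#)` is a
Banach couple (both embed continuously into `(X₀ ∩ X₁)^*`) and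
`(X₀ ∩ X₁)^#` coincides isometrically with `X₀^# + X₁^#`, the latter carrying the norm
`‖y‖ = inf {‖y₀‖_{X₀^#} + ‖y₁‖_{X₁^#} : y = y₀ + y₁}`. -/
theorem fact_sumq
    (n0 n1 : V → ℝ) (hn0 : IsNormC n0) (hn1 : IsNormC n1) :
    (∀ y : V →ₗ[ℂ] ℂ, IsDualBounded n0 y →
        IsDualBounded (interNorm n0 n1) y ∧
        dualNorm (interNorm n0 n1) y ≤ dualNorm n0 y) ∧
    (∀ y : V →ₗ[ℂ] ℂ, IsDualBounded n1 y →
        IsDualBounded (interNorm n0 n1) y ∧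
        dualNorm (interNorm n0 n1) y ≤ dualNorm n1 y) ∧
    (∀ y : V →ₗ[ℂ] ℂ,
      (IsDualBounded (interNorm n0 n1) y ↔
        ∃ y0 y1 : V →ₗ[ℂ] ℂ, y = y0 + y1 ∧ IsDualBounded n0 y0 ∧ IsDualBounded n1 y1)) ∧
    (∀ y : V →ₗ[ℂ] ℂ, IsDualBounded (interNorm n0 n1) y →
      dualNorm (interNorm n0 n1) y =
        sInf {r | ∃ y0 y1 : V →ₗ[ℂ] ℂ, y = y0 + y1 ∧ IsDualBounded n0 y0 ∧
          IsDualBounded n1 y1 ∧ r = dualNorm n0 y0 + dualNorm n1 y1}) := by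
  obtain ⟨p, rfl⟩ := hn0.exists_seminorm
  obtain ⟨q, rfl⟩ := hn1.exists_seminorm
  rw [interNorm_eq_sup]
  refine ⟨fun y hy => ⟨hy.mono le_sup_left, dualNorm_anti le_sup_left hy⟩,
    fun y hy => ⟨hy.mono le_sup_right, dualNorm_anti le_sup_right hy⟩,
    fun y => ⟨fun hy => ?_, ?_⟩, fun y hy => (isLeast_dualNorm_sup hy).csInf_eq.symm⟩
  · obtain ⟨y0, y1, hy, h0, h1, -⟩ := exists_add_eq_and_dualNorm_sup_eq hy
    exact ⟨y0, y1, hy, h0, h1⟩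
  · rintro ⟨y0, y1, rfl, h0, h1⟩
    exact h0.add_sup h1
end

section
/- Interior version of the three lines theorem: Let M₀, M₁, c > 0, and let f be analytic on the open strip S° = {z : 0 < Re z < 1} satisfying |f(z)| ≤ c(1 + |z|) there, and lim_{r → 0⁺} sup{|f(z)| : z ∈ S°, 0 < |Re z − j| < r} ≤ M_j for j = 0, 1. Then |f(z)| ≤ M₀^{1 − Re z} · M₁^{Re z} for all z ∈ S°. -/
/-!
On a substrip `δ ≤ re z ≤ 1 - δ` the function is continuous up to the boundary, and linear growth
is far below the double-exponential threshold of Phragmén–Lindelöf, so `f` is bounded there by its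
boundary values `Mⱼ + ε`. Hadamard's three lines theorem on the substrip then gives the
interpolated bound, and one lets first `δ → 0`, then `ε → 0`.
-/

open Complex Set Filter Topology Asymptotics HadamardThreeLines

theorem one_add_le_exp_inv_mul_exp_mul {c : ℝ} (hc : 0 < c) (t : ℝ) :
    1 + t ≤ Real.exp (c⁻¹ * Real.exp (c * t)) := by
  have h : t ≤ c⁻¹ * Real.exp (c * t) := calc
    t ≤ c⁻¹ * (1 + c * t) := by rw [mul_add, inv_mul_cancel_left₀ hc.ne']; linarith [inv_pos.2 hc]
    _ ≤ c⁻¹ * Real.exp (c * t) := by gcongr; linarith [Real.add_one_le_exp (c * t)]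
  linarith [Real.add_one_le_exp t, Real.exp_le_exp.2 h]

section LinearGrowth

variable {E : Type*} [NormedAddCommGroup E] {f : ℂ → E} {l u c : ℝ}

theorem isBigO_exp_exp_of_linear_growth (hlu : l < u)
    (hgrow : ∀ z ∈ verticalStrip l u, ‖f z‖ ≤ c * (1 + ‖z‖)) :
    ∃ c' < Real.pi / (u - l), ∃ B, f =O[comap (_root_.abs ∘ im) atTop ⊓ 𝓟 (verticalStrip l u)]
      fun z ↦ Real.exp (B * Real.exp (c' * |z.im|)) := by
  obtain ⟨c', hc'0, hc'⟩ := exists_between (div_pos Real.pi_pos (sub_pos.2 hlu))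
  refine ⟨c', hc', c'⁻¹, ?_⟩
  have hf : f =O[𝓟 (verticalStrip l u)] fun z ↦ 1 + ‖z‖ :=
    IsBigO.of_bound c <| eventually_principal.2 fun z hz ↦ by
      rw [Real.norm_of_nonneg (by positivity)]; exact hgrow z hz
  have hnorm : (fun z : ℂ ↦ 1 + ‖z‖) =O[𝓟 (verticalStrip l u)] fun z ↦ 1 + |z.im| :=
    IsBigO.of_bound (1 + |l| + |u|) <| eventually_principal.2 fun z hz ↦ by
      have hre : |z.re| ≤ |l| + |u| := abs_le.2
        ⟨by linarith [hz.1, neg_abs_le l, abs_nonneg u],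
          by linarith [hz.2, le_abs_self u, abs_nonneg l]⟩
      rw [Real.norm_of_nonneg (by positivity), Real.norm_of_nonneg (by positivity)]
      nlinarith [norm_le_abs_re_add_abs_im z, abs_nonneg z.im, abs_nonneg l, abs_nonneg u]
  have hexp : (fun z : ℂ ↦ 1 + |z.im|) =O[⊤] fun z ↦ Real.exp (c'⁻¹ * Real.exp (c' * |z.im|)) :=
    IsBigO.of_bound 1 <| Eventually.of_forall fun z ↦ by
      rw [Real.norm_of_nonneg (by positivity), Real.norm_of_nonneg (by positivity), one_mul]
      exact one_add_le_exp_inv_mul_exp_mul hc'0 _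
  exact ((hf.trans hnorm).trans (hexp.mono le_top)).mono inf_le_right

variable [NormedSpace ℂ E]

theorem bddAbove_norm_of_linear_growth (hlu : l < u) (hd : DiffContOnCl ℂ f (verticalStrip l u))
    (hgrow : ∀ z ∈ verticalStrip l u, ‖f z‖ ≤ c * (1 + ‖z‖)) {a b : ℝ}
    (ha : ∀ z ∈ re ⁻¹' {l}, ‖f z‖ ≤ a) (hb : ∀ z ∈ re ⁻¹' {u}, ‖f z‖ ≤ b) :
    BddAbove ((norm ∘ f) '' verticalClosedStrip l u) := by
  refine ⟨max a b, ?_⟩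
  rintro _ ⟨z, hz, rfl⟩
  exact PhragmenLindelof.vertical_strip hd (isBigO_exp_exp_of_linear_growth hlu hgrow)
    (fun w hw ↦ (ha w hw).trans (le_max_left a b)) (fun w hw ↦ (hb w hw).trans (le_max_right a b))
    hz.1 hz.2

theorem norm_le_interp_of_linear_growth {z : ℂ} {a b : ℝ} (hlu : l < u)
    (hz : z ∈ verticalClosedStrip l u) (hd : DiffContOnCl ℂ f (verticalStrip l u))
    (hgrow : ∀ z ∈ verticalStrip l u, ‖f z‖ ≤ c * (1 + ‖z‖))
    (ha : ∀ z ∈ re ⁻¹' {l}, ‖f z‖ ≤ a) (hb : ∀ z ∈ re ⁻¹' {u}, ‖f z‖ ≤ b) :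
    ‖f z‖ ≤ a ^ (1 - (z.re - l) / (u - l)) * b ^ ((z.re - l) / (u - l)) :=
  norm_le_interp_of_mem_verticalClosedStrip' hlu hz hd
    (bddAbove_norm_of_linear_growth hlu hd hgrow ha hb) ha hb

theorem diffContOnCl_verticalStrip_of_differentiableOn {a b : ℝ}
    (hf : DifferentiableOn ℂ f (verticalStrip a b))
    (hal : a < l) (hub : u < b) : DiffContOnCl ℂ f (verticalStrip l u) := by
  refine (hf.mono ?_).diffContOnCl
  rw [verticalStrip, closure_preimage_re]
  exact preimage_mono <|
    (closure_minimal Ioo_subset_Icc_self isClosed_Icc).trans (Icc_subset_Ioo hal hub)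

theorem norm_le_interp_of_bound_near_boundary {a b : ℝ}
    (hf : DifferentiableOn ℂ f (verticalStrip 0 1))
    (hgrow : ∀ z ∈ verticalStrip 0 1, ‖f z‖ ≤ c * (1 + ‖z‖))
    (ha : ∃ r > 0, ∀ z ∈ verticalStrip 0 1, z.re < r → ‖f z‖ ≤ a)
    (hb : ∃ r > 0, ∀ z ∈ verticalStrip 0 1, 1 - z.re < r → ‖f z‖ ≤ b)
    {z : ℂ} (hz : z ∈ verticalStrip 0 1) :
    ‖f z‖ ≤ a ^ (1 - z.re) * b ^ z.re := by
  obtain ⟨ra, hra, Ha⟩ := ha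
  obtain ⟨rb, hrb, Hb⟩ := hb
  obtain ⟨hz0, hz1⟩ := hz
  have hinterp : ContinuousAt (fun s : ℝ ↦ a ^ (1 - s) * b ^ s) z.re :=
    ((Real.continuousAt_const_rpow' (sub_pos.2 hz1).ne').comp
      (continuousAt_const.sub continuousAt_id)).mul (Real.continuousAt_const_rpow' hz0.ne')
  have hscale : Tendsto (fun δ : ℝ ↦ (z.re - δ) / ((1 - δ) - δ)) (𝓝[>] 0) (𝓝 z.re) := by
    have : ContinuousAt (fun δ : ℝ ↦ (z.re - δ) / ((1 - δ) - δ)) 0 := by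
      fun_prop (disch := norm_num)
    simpa using this.tendsto.mono_left nhdsWithin_le_nhds
  refine ge_of_tendsto (hinterp.tendsto.comp hscale) ?_
  filter_upwards [Ioo_mem_nhdsGT hra, Ioo_mem_nhdsGT hrb, Ioo_mem_nhdsGT hz0,
    Ioo_mem_nhdsGT (sub_pos.2 hz1)] with δ ⟨hδ, hδa⟩ ⟨_, hδb⟩ ⟨_, hδz⟩ ⟨_, hδz'⟩
  refine norm_le_interp_of_linear_growth (by linarith) ⟨hδz.le, by linarith⟩
    (diffContOnCl_verticalStrip_of_differentiableOn hf hδ (by linarith))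
    (fun w hw ↦ hgrow w ⟨by linarith [hw.1], by linarith [hw.2]⟩) (fun w hw ↦ ?_) (fun w hw ↦ ?_)
  · have hw : w.re = δ := hw
    exact Ha w ⟨by linarith, by linarith⟩ (by linarith)
  · have hw : w.re = 1 - δ := hw
    exact Hb w ⟨by linarith, by linarith⟩ (by linarith)

end LinearGrowth

theorem three_lines_theorem_interior_general
    (M0 M1 c : ℝ)
    (f : ℂ → ℂ)
    (hanal : DifferentiableOn ℂ f {z : ℂ | 0 < z.re ∧ z.re < 1})
    (hgrow : ∀ z : ℂ, 0 < z.re → z.re < 1 → ‖f z‖ ≤ c * (1 + ‖z‖))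
    (h0 : ∀ ε > (0:ℝ), ∃ r > (0:ℝ), ∀ z : ℂ, 0 < z.re → z.re < 1 →
      z.re < r → ‖f z‖ ≤ M0 + ε)
    (h1 : ∀ ε > (0:ℝ), ∃ r > (0:ℝ), ∀ z : ℂ, 0 < z.re → z.re < 1 →
      1 - z.re < r → ‖f z‖ ≤ M1 + ε) :
    ∀ z : ℂ, 0 < z.re → z.re < 1 → ‖f z‖ ≤ M0 ^ (1 - z.re) * M1 ^ z.re := by
  intro z hz0 hz1
  have hlim : Tendsto (fun ε : ℝ ↦ (M0 + ε) ^ (1 - z.re) * (M1 + ε) ^ z.re) (𝓝[>] 0)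
      (𝓝 (M0 ^ (1 - z.re) * M1 ^ z.re)) := by
    have : ContinuousAt (fun ε : ℝ ↦ (M0 + ε) ^ (1 - z.re) * (M1 + ε) ^ z.re) 0 :=
      ((continuousAt_const.add continuousAt_id).rpow_const (Or.inr (sub_pos.2 hz1).le)).mul
        ((continuousAt_const.add continuousAt_id).rpow_const (Or.inr hz0.le))
    simpa using this.tendsto.mono_left nhdsWithin_le_nhds
  refine ge_of_tendsto hlim ?_
  filter_upwards [self_mem_nhdsWithin] with ε (hε : 0 < ε)
  refine norm_le_interp_of_bound_near_boundary hanal (fun w hw ↦ hgrow w hw.1 hw.2) ?_ ?_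
    ⟨hz0, hz1⟩
  · obtain ⟨r, hr, H⟩ := h0 ε hε
    exact ⟨r, hr, fun w hw ↦ H w hw.1 hw.2⟩
  · obtain ⟨r, hr, H⟩ := h1 ε hε
    exact ⟨r, hr, fun w hw ↦ H w hw.1 hw.2⟩

/-- Interior version of the three lines theorem: if `f` is analytic on the open unit strip
`S° = {z : 0 < Re z < 1}`, satisfies `|f z| ≤ c (1 + |z|)` there, and
`lim_{r → 0⁺} sup {|f z| : z ∈ S°, 0 < |Re z − j| < r} ≤ Mⱼ` for `j = 0, 1`, then
`|f z| ≤ M₀ ^ (1 - Re z) * M₁ ^ (Re z)` on `S°`. -/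
theorem three_lines_theorem_interior
    (M0 M1 c : ℝ) (hM0 : 0 < M0) (hM1 : 0 < M1) (hc : 0 < c)
    (f : ℂ → ℂ)
    (hanal : DifferentiableOn ℂ f {z : ℂ | 0 < z.re ∧ z.re < 1})
    (hgrow : ∀ z : ℂ, 0 < z.re → z.re < 1 → ‖f z‖ ≤ c * (1 + ‖z‖))
    (h0 : ∀ ε > (0:ℝ), ∃ r > (0:ℝ), ∀ z : ℂ, 0 < z.re → z.re < 1 →
      z.re < r → ‖f z‖ ≤ M0 + ε)
    (h1 : ∀ ε > (0:ℝ), ∃ r > (0:ℝ), ∀ z : ℂ, 0 < z.re → z.re < 1 →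
      1 - z.re < r → ‖f z‖ ≤ M1 + ε) :
    ∀ z : ℂ, 0 < z.re → z.re < 1 → ‖f z‖ ≤ M0 ^ (1 - z.re) * M1 ^ z.re :=
  three_lines_theorem_interior_general M0 M1 c f hanal hgrow h0 h1
end

section
/- Let θ ∈ (0,1), and let ξ : 𝔻° → S° be the conformal map ξ(w) = (1/iπ) log((w·e^{−iπθ} − e^{iπθ})/(w−1)) with ξ(0) = θ. Let M₀, M₁ > 0 and let h : 𝕋 → ℂ be measurable with ĥ(n) = 0 for all n < 0, |h| ≤ M₀ a.e. on the arc Γ₀ = {e^{it} : 2πθ < t < 2π}, and |h| ≤ M₁ a.e. on Γ₁ = {e^{it} : 0 < t < 2πθ}. Then the analytic function u(w) = ∑_{n≥0} ĥ(n) wⁿ satisfies |u(ξ^{−1}(z))| ≤ M₀^{1 − Re z} · M₁^{Re z} for all z ∈ S°. -/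
open Complex MeasureTheory
open scoped Real

/-- The `n`-th Fourier coefficient `ĥ(n) = (1/2π) ∫₀^{2π} e^{−int} h(e^{it}) dt` of a
function on the unit circle, given via `H t = h(e^{it})`. -/
noncomputable def circCoeff (H : ℝ → ℂ) (n : ℤ) : ℂ :=
  (1 / (2 * π) : ℝ) * ∫ t in (0:ℝ)..(2 * π), Complex.exp (-(n : ℂ) * t * I) * H t

/-- The inverse `ξ⁻¹(z) = (e^{iπθ} − e^{iπz})/(e^{−iπθ} − e^{iπz})` of the conformal map
`ξ` of the open unit disk onto the open unit strip with `ξ(0) = θ`. -/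
noncomputable def xiInv (θ : ℝ) (z : ℂ) : ℂ :=
  (Complex.exp ((π * θ : ℝ) * I) - Complex.exp ((π : ℂ) * z * I)) /
    (Complex.exp (-(π * θ : ℝ) * I) - Complex.exp ((π : ℂ) * z * I))

/-!
Because `ĥ` vanishes at negative frequencies, `u` is the Poisson integral of `h`, so
`|u(w)| ≤ M₁ ω(w) + M₀ (1 - ω(w))`, where `ω(w)` is the harmonic measure of `Γ₁` seen from `w`.
The Poisson kernel has the explicit primitive `t + 2 arg (1 - w e^{-it})`, and for
`w = ξ⁻¹(z)` the two values of `1 - w e^{-it}` at the ends of `Γ₁` differ by the factor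
`e^{iπ(z - θ)}`; hence `ω(ξ⁻¹(z)) = Re z`. So `f = u ∘ ξ⁻¹` obeys the arithmetic bound
`|f(z)| ≤ (1 - Re z) M₀ + Re z M₁` on the strip. On each substrip `δ ≤ Re z ≤ 1 - δ` the function
`f` is bounded and holomorphic up to the boundary, so Hadamard's three-lines theorem turns the
arithmetic bound on its edges into a geometric one; letting `δ → 0` gives the claim.
-/

open Topology Complex.HadamardThreeLines

namespace PoissonSeries

noncomputable def circSeries (H : ℝ → ℂ) (w : ℂ) : ℂ := ∑' n : ℕ, circCoeff H n * w ^ n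

lemma re_one_sub_mul_pos {w ζ : ℂ} (hw : ‖w‖ < 1) (hζ : ‖ζ‖ = 1) : 0 < (1 - w * ζ).re := by
  have := Complex.re_le_norm (w * ζ)
  rw [norm_mul, hζ, mul_one] at this
  rw [Complex.sub_re, Complex.one_re]
  linarith

lemma one_sub_mul_ne_zero {w ζ : ℂ} (hw : ‖w‖ < 1) (hζ : ‖ζ‖ = 1) : 1 - w * ζ ≠ 0 :=
  ne_zero_of_re_pos (re_one_sub_mul_pos hw hζ)

section Coefficients

variable {H : ℝ → ℂ}

lemma norm_circCoeff_le (n : ℤ) :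
    ‖circCoeff H n‖ ≤ (2 * π)⁻¹ * ∫ t in (0:ℝ)..(2 * π), ‖H t‖ := by
  rw [circCoeff, norm_mul, Complex.norm_real, Real.norm_of_nonneg (by positivity), one_div]
  gcongr
  refine (intervalIntegral.norm_integral_le_integral_norm Real.two_pi_pos.le).trans_eq ?_
  congr 1 with t
  rw [norm_mul, Complex.norm_exp]
  simp

lemma differentiableOn_circSeries (H : ℝ → ℂ) :
    DifferentiableOn ℂ (circSeries H) (Metric.ball 0 1) := by
  set p := FormalMultilinearSeries.ofScalars ℂ (fun n : ℕ => circCoeff H n)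
  have hrad : 1 ≤ p.radius := p.le_radius_of_bound _ fun n => by
    simpa [p] using norm_circCoeff_le (H := H) n
  have hsum : p.sum = circSeries H := by
    ext w
    exact FormalMultilinearSeries.ofScalars_sum_eq _ w
  rw [← hsum]
  refine (p.hasFPowerSeriesOnBall (zero_lt_one.trans_le hrad)).differentiableOn.mono ?_
  rw [← NNReal.coe_one, ← Metric.eball_coe]
  exact Metric.eball_subset_eball (by simpa using hrad)

lemma circCoeff_zero (H : ℝ → ℂ) :
    circCoeff H 0 = (1 / (2 * π) : ℝ) * ∫ t in (0:ℝ)..(2 * π), H t := by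
  simp [circCoeff]

lemma intervalIntegrable_inv_one_sub_mul_exp (hint : IntervalIntegrable H volume 0 (2 * π))
    {c : ℂ} (hc : ‖c‖ < 1) (k : ℤ) :
    IntervalIntegrable (fun t : ℝ => (1 - c * Complex.exp (-(k : ℂ) * t * I))⁻¹ * H t) volume
      0 (2 * π) :=
  hint.continuousOn_mul (Continuous.continuousOn (Continuous.inv₀ (by fun_prop) fun t =>
    one_sub_mul_ne_zero hc (by simpa using Complex.norm_exp_ofReal_mul_I (-k * t))))

lemma hasSum_circCoeff_geometric (hint : IntervalIntegrable H volume 0 (2 * π))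
    {c : ℂ} (hc : ‖c‖ < 1) (k : ℤ) :
    HasSum (fun n : ℕ => c ^ n * circCoeff H (k * n))
      ((1 / (2 * π) : ℝ) * ∫ t in (0:ℝ)..(2 * π),
        (1 - c * Complex.exp (-(k : ℂ) * t * I))⁻¹ * H t) := by
  have hterm (n : ℕ) (t : ℝ) : (c * Complex.exp (-(k : ℂ) * t * I)) ^ n * H t
      = c ^ n * (Complex.exp (-((k * n : ℤ) : ℂ) * t * I) * H t) := by
    rw [mul_pow, ← Complex.exp_nat_mul]; push_cast; ring_nf
  have hnorm (t : ℝ) : ‖Complex.exp (-(k : ℂ) * t * I)‖ = 1 := by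
    rw [Complex.norm_exp]; simp
  have hsum := intervalIntegral.hasSum_integral_of_dominated_convergence
    (F := fun (n : ℕ) t => (c * Complex.exp (-(k : ℂ) * t * I)) ^ n * H t)
    (f := fun t => (1 - c * Complex.exp (-(k : ℂ) * t * I))⁻¹ * H t)
    (fun n t => ‖c‖ ^ n * ‖H t‖)
    (fun n => (Continuous.aestronglyMeasurable (by fun_prop)).mul
      hint.aestronglyMeasurable_restrict_uIoc)
    (fun n => ae_of_all _ fun t _ => by rw [norm_mul, norm_pow, norm_mul, hnorm, mul_one])
    (ae_of_all _ fun t _ => (summable_geometric_of_lt_one (norm_nonneg c) hc).mul_right _)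
    (by simpa only [tsum_mul_right] using hint.norm.const_mul _)
    (ae_of_all _ fun t _ => (hasSum_geometric_of_norm_lt_one
      (by rwa [norm_mul, hnorm, mul_one])).mul_right (H t))
  have hcoeff (n : ℕ) : c ^ n * circCoeff H (k * n) = (1 / (2 * π) : ℝ) *
      ∫ t in (0:ℝ)..(2 * π), (c * Complex.exp (-(k : ℂ) * t * I)) ^ n * H t := by
    rw [intervalIntegral.integral_congr fun t _ => hterm n t, intervalIntegral.integral_const_mul,
      circCoeff]
    ring
  simpa only [hcoeff] using hsum.mul_left _

end Coefficients

section PoissonIntegral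

variable {H : ℝ → ℂ}

lemma poissonKernel_exp_eq {w : ℂ} (hw : ‖w‖ < 1) (t : ℝ) :
    (poissonKernel 0 w (Complex.exp (t * I)) : ℂ) =
      (1 - w * Complex.exp (-(t * I)))⁻¹ + (1 - (starRingEnd ℂ) w * Complex.exp (t * I))⁻¹ - 1 := by
  set z := Complex.exp (t * I)
  set z' := Complex.exp (-(t * I))
  have hzz' : z * z' = 1 := by rw [← Complex.exp_add, add_neg_cancel, Complex.exp_zero]
  have hconj : (starRingEnd ℂ) z = z' := by rw [← Complex.exp_conj]; simp [z']
  have hz : ‖z‖ = 1 := Complex.norm_exp_ofReal_mul_I t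
  have hz' : ‖z'‖ = 1 := by rw [← hconj, Complex.norm_conj, hz]
  have h1 := one_sub_mul_ne_zero hw hz'
  have h2 : 1 - z * (starRingEnd ℂ) w ≠ 0 := by
    rw [mul_comm]; exact one_sub_mul_ne_zero (by rwa [Complex.norm_conj]) hz
  have h3 : z - w ≠ 0 := fun h => h1 (by linear_combination z' * h - hzz')
  have hz0 : z ≠ 0 := Complex.exp_ne_zero _
  rw [poissonKernel_eq_re_herglotzRieszKernel, Function.comp_apply, Complex.re_eq_add_conj,
    herglotzRieszKernel, map_div₀]
  simp only [sub_zero, map_add, map_sub, hconj]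
  rw [eq_inv_of_mul_eq_one_right hzz']
  field_simp
  ring

theorem circSeries_eq_integral_poissonKernel (hint : IntervalIntegrable H volume 0 (2 * π))
    (hneg : ∀ n : ℤ, n < 0 → circCoeff H n = 0) {w : ℂ} (hw : ‖w‖ < 1) :
    circSeries H w = (1 / (2 * π) : ℝ) *
      ∫ t in (0:ℝ)..(2 * π), (poissonKernel 0 w (Complex.exp (t * I)) : ℂ) * H t := by
  have hw' : ‖(starRingEnd ℂ) w‖ < 1 := by rwa [Complex.norm_conj]
  have hseries := hasSum_circCoeff_geometric hint hw 1
  have hconj := hasSum_circCoeff_geometric hint hw' (-1)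
  have hconj₀ : HasSum (fun n : ℕ => (starRingEnd ℂ) w ^ n * circCoeff H (-1 * n))
      (circCoeff H 0) := by
    convert hasSum_single (f := fun n : ℕ => (starRingEnd ℂ) w ^ n * circCoeff H (-1 * n)) 0
      fun n hn => by rw [hneg _ (by omega), mul_zero] using 1
    simp
  have hP (t : ℝ) : (poissonKernel 0 w (Complex.exp (t * I)) : ℂ) * H t =
      (1 - w * Complex.exp (-((1 : ℤ) : ℂ) * t * I))⁻¹ * H t +
        (1 - (starRingEnd ℂ) w * Complex.exp (-((-1 : ℤ) : ℂ) * t * I))⁻¹ * H t - H t := by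
    rw [poissonKernel_exp_eq hw]
    push_cast
    ring_nf
  have hint1 := intervalIntegrable_inv_one_sub_mul_exp hint hw 1
  have hint2 := intervalIntegrable_inv_one_sub_mul_exp hint hw' (-1)
  rw [intervalIntegral.integral_congr fun t _ => hP t, intervalIntegral.integral_sub
    (hint1.add hint2) hint, intervalIntegral.integral_add hint1 hint2, mul_sub, mul_add,
    ← hseries.tsum_eq, hconj.unique hconj₀, ← circCoeff_zero]
  simp [circSeries, mul_comm]

lemma poissonKernel_exp_nonneg {w : ℂ} (hw : ‖w‖ < 1) (t : ℝ) :
    0 ≤ poissonKernel 0 w (Complex.exp (t * I)) := by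
  rw [poissonKernel_def, sub_zero, sub_zero, Complex.norm_exp_ofReal_mul_I]
  exact div_nonneg (by nlinarith [norm_nonneg w]) (by positivity)

lemma continuous_poissonKernel_exp {w : ℂ} (hw : ‖w‖ < 1) :
    Continuous fun t : ℝ => poissonKernel 0 w (Complex.exp (t * I)) := by
  simp only [poissonKernel_def, sub_zero]
  refine Continuous.div (by fun_prop) (by fun_prop) fun t => pow_ne_zero _ (norm_ne_zero_iff.2 ?_)
  intro h
  have := congrArg norm (sub_eq_zero.1 h)
  rw [Complex.norm_exp_ofReal_mul_I] at this
  exact hw.ne' this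

noncomputable def arcHarmonicMeasure (w : ℂ) (a b : ℝ) : ℝ :=
  (2 * π)⁻¹ * ∫ t in a..b, poissonKernel 0 w (Complex.exp (t * I))

lemma norm_circSeries_le (hint : IntervalIntegrable H volume 0 (2 * π))
    (hneg : ∀ n : ℤ, n < 0 → circCoeff H n = 0) {s M0 M1 : ℝ} (hs : s ∈ Set.Icc 0 (2 * π))
    (hbd0 : ∀ᵐ t ∂(volume.restrict (Set.Ioo s (2 * π))), ‖H t‖ ≤ M0)
    (hbd1 : ∀ᵐ t ∂(volume.restrict (Set.Ioo 0 s)), ‖H t‖ ≤ M1) {w : ℂ} (hw : ‖w‖ < 1) :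
    ‖circSeries H w‖ ≤ M1 * arcHarmonicMeasure w 0 s + M0 * arcHarmonicMeasure w s (2 * π) := by
  set P := fun t : ℝ => poissonKernel 0 w (Complex.exp (t * I))
  have hP : Continuous P := continuous_poissonKernel_exp hw
  have hPH (a b : ℝ) (hab : Set.uIcc a b ⊆ Set.uIcc 0 (2 * π)) :
      IntervalIntegrable (fun t => P t * ‖H t‖) volume a b :=
    (hint.norm.mono_set hab).continuousOn_mul hP.continuousOn
  have hmono {a b M : ℝ} (hab : a ≤ b) (hsub : Set.uIcc a b ⊆ Set.uIcc 0 (2 * π))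
      (hbd : ∀ᵐ t ∂(volume.restrict (Set.Ioo a b)), ‖H t‖ ≤ M) :
      ∫ t in a..b, P t * ‖H t‖ ≤ M * ∫ t in a..b, P t := by
    rw [← intervalIntegral.integral_const_mul]
    refine intervalIntegral.integral_mono_ae_restrict hab (hPH a b hsub)
      ((hP.intervalIntegrable a b).const_mul M) ?_
    rw [Measure.restrict_congr_set Ioo_ae_eq_Icc.symm]
    filter_upwards [hbd] with t ht
    rw [mul_comm M]
    exact mul_le_mul_of_nonneg_left ht (poissonKernel_exp_nonneg hw t)
  have hs' := Set.mem_uIcc_of_le hs.1 hs.2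
  have h0s : Set.uIcc 0 s ⊆ Set.uIcc 0 (2 * π) := Set.uIcc_subset_uIcc_left hs'
  have hs2 : Set.uIcc s (2 * π) ⊆ Set.uIcc 0 (2 * π) := Set.uIcc_subset_uIcc_right hs'
  calc ‖circSeries H w‖
      ≤ (1 / (2 * π)) * ∫ t in (0:ℝ)..(2 * π), P t * ‖H t‖ := by
        rw [circSeries_eq_integral_poissonKernel hint hneg hw, norm_mul, Complex.norm_real,
          Real.norm_of_nonneg (by positivity)]
        gcongr
        refine (intervalIntegral.norm_integral_le_integral_norm (E := ℂ)
          Real.two_pi_pos.le).trans_eq ?_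
        congr 1 with t
        rw [norm_mul, Complex.norm_real, Real.norm_of_nonneg (poissonKernel_exp_nonneg hw t)]
    _ = (1 / (2 * π)) * ((∫ t in (0:ℝ)..s, P t * ‖H t‖) + ∫ t in s..(2 * π), P t * ‖H t‖) := by
        rw [intervalIntegral.integral_add_adjacent_intervals (hPH 0 s h0s) (hPH s _ hs2)]
    _ ≤ (1 / (2 * π)) * (M1 * (∫ t in (0:ℝ)..s, P t) + M0 * ∫ t in s..(2 * π), P t) := by
        gcongr
        · exact hmono hs.1 h0s hbd1
        · exact hmono hs.2 hs2 hbd0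
    _ = _ := by
        simp only [arcHarmonicMeasure, P]
        ring

end PoissonIntegral

/-- The primitive is `Re (t - 2i log (1 - w e^{-it}))`; no branch of the logarithm is crossed
because `1 - w e^{-it}` stays in the right half-plane. -/
lemma hasDerivAt_poissonKernel_primitive {w : ℂ} (hw : ‖w‖ < 1) (t : ℝ) :
    HasDerivAt (fun t : ℝ => t + 2 * arg (1 - w * Complex.exp (-(t * I))))
      (poissonKernel 0 w (Complex.exp (t * I))) t := by
  set z := Complex.exp (t * I)
  set ζ := Complex.exp (-(t * I))
  have hzζ : z * ζ = 1 := by rw [← Complex.exp_add, add_neg_cancel, Complex.exp_zero]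
  have hζ : ‖ζ‖ = 1 := by simpa using Complex.norm_exp_ofReal_mul_I (-t)
  have hre := re_one_sub_mul_pos hw hζ
  have hlog : HasDerivAt (fun u : ℂ => Complex.log (1 - w * Complex.exp (-(u * I))))
      (w * ζ * I / (1 - w * ζ)) t := by
    have hinner : HasDerivAt (fun u : ℂ => 1 - w * Complex.exp (-(u * I))) (w * ζ * I) t := by
      have h := (((hasDerivAt_mul_const (-I) (x := (t : ℂ))).cexp).const_mul w).const_sub 1
      simp only [mul_neg] at h
      exact h.congr_deriv (by ring)
    exact hinner.clog (mem_slitPlane_iff.2 (Or.inl hre))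
  have hQ := ((hasDerivAt_id (t : ℂ)).sub (hlog.const_mul (2 * I))).real_of_complex
  convert hQ using 1
  · ext t
    simp [Complex.log_im]
  · rw [poissonKernel_eq_re_herglotzRieszKernel, Function.comp_apply, herglotzRieszKernel]
    congr 1
    have h1 : 1 - w * ζ ≠ 0 := ne_zero_of_re_pos hre
    have h2 : z - w ≠ 0 := fun h => h1 (by linear_combination ζ * h - hzζ)
    have hz : z ≠ 0 := Complex.exp_ne_zero _
    rw [eq_inv_of_mul_eq_one_right hzζ] at h1 ⊢
    simp only [sub_zero]
    field_simp
    linear_combination (2 * w) * Complex.I_sq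

lemma integral_poissonKernel_exp {w : ℂ} (hw : ‖w‖ < 1) (a b : ℝ) :
    ∫ t in a..b, poissonKernel 0 w (Complex.exp (t * I)) =
      b - a + 2 * (arg (1 - w * Complex.exp (-(b * I))) -
        arg (1 - w * Complex.exp (-(a * I)))) := by
  rw [intervalIntegral.integral_eq_sub_of_hasDerivAt
    (fun t _ => hasDerivAt_poissonKernel_primitive hw t)
    ((continuous_poissonKernel_exp hw).intervalIntegrable a b)]
  ring

lemma arg_mul_exp {a c : ℂ} (ha : 0 < a.re) (hac : 0 < (a * Complex.exp c).re)
    (hc : |c.im| < π) : arg (a * Complex.exp c) = arg a + c.im := by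
  have hexp : arg (Complex.exp c) = c.im := by
    rw [Complex.arg_exp, toIocMod_eq_self]
    constructor <;> linarith [abs_lt.1 hc]
  have hangle := Complex.arg_mul_coe_angle (ne_zero_of_re_pos ha) (Complex.exp_ne_zero c)
  rw [hexp, ← Real.Angle.coe_add, Real.Angle.angle_eq_iff_two_pi_dvd_sub] at hangle
  obtain ⟨k, hk⟩ := hangle
  have h1 := abs_lt.1 (Complex.abs_arg_lt_pi_div_two_iff.2 (Or.inl ha))
  have h2 := abs_lt.1 (Complex.abs_arg_lt_pi_div_two_iff.2 (Or.inl hac))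
  -- both arguments lie in `(-π/2, π/2)`, so the two sides differ by less than `2π`
  have hk0 : k = 0 := by
    have hlt : |(k : ℝ)| < 1 := by
      rw [abs_lt]
      constructor <;> nlinarith [abs_lt.1 hc, Real.pi_pos]
    exact Int.abs_lt_one_iff.1 (by exact_mod_cast hlt)
  rwa [hk0, Int.cast_zero, mul_zero, sub_eq_zero] at hk

section ConformalMap

variable {θ : ℝ}

lemma im_exp_pi_mul_I_pos {z : ℂ} (h0 : 0 < z.re) (h1 : z.re < 1) :
    0 < (Complex.exp (π * z * I)).im := by
  have him : ((π : ℂ) * z * I).im = π * z.re := by simp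
  rw [Complex.exp_im, him]
  exact mul_pos (Real.exp_pos _)
    (Real.sin_pos_of_pos_of_lt_pi (by positivity) (by nlinarith [Real.pi_pos]))

lemma im_exp_neg_pi_mul_I_neg (hθ : θ ∈ Set.Ioo (0:ℝ) 1) :
    (Complex.exp (-(π * θ : ℝ) * I)).im < 0 := by
  rw [← Complex.ofReal_neg, Complex.exp_ofReal_mul_I_im, Real.sin_neg, neg_lt_zero]
  exact Real.sin_pos_of_pos_of_lt_pi (by nlinarith [Real.pi_pos, hθ.1])
    (by nlinarith [Real.pi_pos, hθ.2])

lemma xiInv_denom_ne_zero (hθ : θ ∈ Set.Ioo (0:ℝ) 1) {z : ℂ} (h0 : 0 < z.re) (h1 : z.re < 1) :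
    Complex.exp (-(π * θ : ℝ) * I) - Complex.exp (π * z * I) ≠ 0 := fun h => by
  have := congrArg Complex.im (sub_eq_zero.1 h)
  linarith [im_exp_neg_pi_mul_I_neg hθ, im_exp_pi_mul_I_pos h0 h1]

lemma differentiableOn_xiInv (hθ : θ ∈ Set.Ioo (0:ℝ) 1) :
    DifferentiableOn ℂ (xiInv θ) (verticalStrip 0 1) := fun z hz => by
  have hq : Differentiable ℂ fun z : ℂ => Complex.exp (π * z * I) := by fun_prop
  exact (((hq z).const_sub _).div ((hq z).const_sub _)
    (xiInv_denom_ne_zero hθ hz.1 hz.2)).differentiableWithinAt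

lemma norm_xiInv_lt_one (hθ : θ ∈ Set.Ioo (0:ℝ) 1) {z : ℂ} (h0 : 0 < z.re) (h1 : z.re < 1) :
    ‖xiInv θ z‖ < 1 := by
  set A := Complex.exp ((π * θ : ℝ) * I)
  set B := Complex.exp (-(π * θ : ℝ) * I)
  set q := Complex.exp (π * z * I)
  have hre : B.re = A.re := by
    simp only [A, B, ← Complex.ofReal_neg, Complex.exp_ofReal_mul_I_re, Real.cos_neg]
  have him : B.im = -A.im := by
    simp only [A, B, ← Complex.ofReal_neg, Complex.exp_ofReal_mul_I_im, Real.sin_neg]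
  have hB := im_exp_neg_pi_mul_I_neg hθ
  have hq := im_exp_pi_mul_I_pos h0 h1
  rw [xiInv, norm_div, div_lt_one (norm_pos_iff.2 (xiInv_denom_ne_zero hθ h0 h1)),
    ← abs_norm, ← abs_norm (B - q), ← sq_lt_sq, Complex.sq_norm, Complex.sq_norm,
    Complex.normSq_apply, Complex.normSq_apply]
  simp only [Complex.sub_re, Complex.sub_im, hre, him] at hB ⊢
  nlinarith

lemma one_sub_xiInv_mul_exp (hθ : θ ∈ Set.Ioo (0:ℝ) 1) {z : ℂ} (h0 : 0 < z.re)
    (h1 : z.re < 1) :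
    1 - xiInv θ z * Complex.exp (-((2 * π * θ : ℝ) * I)) =
      (1 - xiInv θ z) * Complex.exp (π * (z - θ) * I) := by
  have hden := xiInv_denom_ne_zero hθ h0 h1
  rw [xiInv]
  set A := Complex.exp ((π * θ : ℝ) * I)
  set B := Complex.exp (-(π * θ : ℝ) * I)
  set q := Complex.exp (π * z * I)
  have hAB : A * B = 1 := by rw [← Complex.exp_add]; ring_nf; exact Complex.exp_zero
  have hB2 : Complex.exp (-((2 * π * θ : ℝ) * I)) = B * B := by
    rw [← Complex.exp_add]; push_cast; ring_nf
  have hqB : Complex.exp (π * (z - θ) * I) = q * B := by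
    rw [← Complex.exp_add]; push_cast; ring_nf
  rw [hB2, hqB]
  field_simp
  linear_combination (q - B) * hAB

lemma arg_one_sub_xiInv_mul_exp (hθ : θ ∈ Set.Ioo (0:ℝ) 1) {z : ℂ} (h0 : 0 < z.re)
    (h1 : z.re < 1) :
    arg (1 - xiInv θ z * Complex.exp (-((2 * π * θ : ℝ) * I))) =
      arg (1 - xiInv θ z) + π * (z.re - θ) := by
  have hw := norm_xiInv_lt_one hθ h0 h1
  have hpos := re_one_sub_mul_pos hw (ζ := Complex.exp (-((2 * π * θ : ℝ) * I)))
    (by simpa using Complex.norm_exp_ofReal_mul_I (-(2 * π * θ)))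
  rw [one_sub_xiInv_mul_exp hθ h0 h1] at hpos ⊢
  rw [arg_mul_exp (by simpa using re_one_sub_mul_pos hw (norm_one (α := ℂ))) hpos]
  · simp [Complex.mul_re, Complex.mul_im]
  · simp only [Complex.mul_im, Complex.mul_re, Complex.ofReal_re, Complex.ofReal_im,
      Complex.sub_re, Complex.sub_im, Complex.I_re, Complex.I_im, sub_zero, zero_mul, mul_one,
      add_zero, mul_zero, abs_mul]
    rw [abs_of_pos Real.pi_pos]
    have : |z.re - θ| < 1 := abs_lt.2 ⟨by linarith [hθ.2], by linarith [hθ.1]⟩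
    nlinarith [Real.pi_pos]

lemma arcHarmonicMeasure_xiInv_left (hθ : θ ∈ Set.Ioo (0:ℝ) 1) {z : ℂ} (h0 : 0 < z.re)
    (h1 : z.re < 1) : arcHarmonicMeasure (xiInv θ z) 0 (2 * π * θ) = z.re := by
  rw [arcHarmonicMeasure, integral_poissonKernel_exp (norm_xiInv_lt_one hθ h0 h1),
    arg_one_sub_xiInv_mul_exp hθ h0 h1]
  simp only [Complex.ofReal_zero, zero_mul, neg_zero, Complex.exp_zero, mul_one]
  field_simp
  ring

lemma arcHarmonicMeasure_xiInv_right (hθ : θ ∈ Set.Ioo (0:ℝ) 1) {z : ℂ} (h0 : 0 < z.re)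
    (h1 : z.re < 1) : arcHarmonicMeasure (xiInv θ z) (2 * π * θ) (2 * π) = 1 - z.re := by
  rw [arcHarmonicMeasure, integral_poissonKernel_exp (norm_xiInv_lt_one hθ h0 h1),
    arg_one_sub_xiInv_mul_exp hθ h0 h1]
  have : Complex.exp (-((2 * π : ℝ) * I)) = 1 := by
    rw [Complex.exp_neg, Complex.ofReal_mul, Complex.ofReal_ofNat, Complex.exp_two_pi_mul_I,
      inv_one]
  rw [this, mul_one]
  field_simp
  ring

end ConformalMap

theorem norm_le_rpow_of_norm_le_affine {E : Type*} [NormedAddCommGroup E] [NormedSpace ℂ E]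
    {f : ℂ → E} {a b : ℝ} (ha : 0 < a) (hb : 0 < b)
    (hf : DifferentiableOn ℂ f (verticalStrip 0 1))
    (hbd : ∀ z ∈ verticalStrip 0 1, ‖f z‖ ≤ (1 - z.re) * a + z.re * b)
    {z : ℂ} (hz : z ∈ verticalStrip 0 1) : ‖f z‖ ≤ a ^ (1 - z.re) * b ^ z.re := by
  obtain ⟨hz0, hz1⟩ : 0 < z.re ∧ z.re < 1 := hz
  set g : ℝ → ℝ := fun δ => ((1 - δ) * a + δ * b) ^ (1 - (z.re - δ) / (1 - δ - δ)) *
    (δ * a + (1 - δ) * b) ^ ((z.re - δ) / (1 - δ - δ))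
  have hg : ContinuousAt g 0 := by
    have hden : ContinuousAt (fun δ : ℝ => (z.re - δ) / (1 - δ - δ)) 0 :=
      ContinuousAt.div (by fun_prop) (by fun_prop) (by norm_num)
    exact ((by fun_prop : Continuous fun δ : ℝ => (1 - δ) * a + δ * b).continuousAt.rpow
      (continuousAt_const.sub hden) (Or.inl (by simpa using ha.ne'))).mul
      ((by fun_prop : Continuous fun δ : ℝ => δ * a + (1 - δ) * b).continuousAt.rpow
      hden (Or.inl (by simpa using hb.ne')))
  have hg0 : g 0 = a ^ (1 - z.re) * b ^ z.re := by simp [g]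
  refine hg0 ▸ ge_of_tendsto (hg.tendsto.mono_left (nhdsWithin_le_nhds (s := Set.Ioi 0))) ?_
  have hmem : Set.Ioo 0 (min z.re (1 - z.re)) ∈ 𝓝[>] (0 : ℝ) :=
    Ioo_mem_nhdsGT (lt_min hz0 (by linarith))
  filter_upwards [hmem] with δ ⟨hδ0, hδ⟩
  have hδx : δ < z.re := hδ.trans_le (min_le_left _ _)
  have hδx' : δ < 1 - z.re := hδ.trans_le (min_le_right _ _)
  have hsub : verticalClosedStrip δ (1 - δ) ⊆ verticalStrip 0 1 := fun w hw =>
    ⟨hδ0.trans_le hw.1, by linarith [hw.2]⟩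
  refine norm_le_interp_of_mem_verticalClosedStrip' (by linarith) ⟨hδx.le, by linarith⟩
    (hf.mono ((closure_minimal (Set.preimage_mono Set.Ioo_subset_Icc_self)
      (isClosed_Icc.preimage continuous_re)).trans hsub)).diffContOnCl ?_ ?_ ?_
  · refine ⟨max a b, Set.forall_mem_image.2 fun w hw => (hbd w (hsub hw)).trans ?_⟩
    obtain ⟨h0, h1⟩ : 0 < w.re ∧ w.re < 1 := hsub hw
    nlinarith [le_max_left a b, le_max_right a b]
  · intro w (hw : w.re = δ)
    simpa [hw] using hbd w ⟨hw ▸ hδ0, by linarith⟩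
  · intro w (hw : w.re = 1 - δ)
    simpa [hw] using hbd w ⟨by linarith, by linarith⟩

end PoissonSeries

open PoissonSeries in
theorem poisson_series_three_lines_general
    (θ : ℝ) (hθ : θ ∈ Set.Ioo (0:ℝ) 1)
    (M0 M1 : ℝ) (hM0 : 0 < M0) (hM1 : 0 < M1)
    (H : ℝ → ℂ)
    (hint : IntervalIntegrable H volume 0 (2 * π))
    (hneg : ∀ n : ℤ, n < 0 → circCoeff H n = 0)
    (hbd0 : ∀ᵐ t ∂(volume.restrict (Set.Ioo (2 * π * θ) (2 * π))), ‖H t‖ ≤ M0)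
    (hbd1 : ∀ᵐ t ∂(volume.restrict (Set.Ioo (0:ℝ) (2 * π * θ))), ‖H t‖ ≤ M1) :
    ∀ z : ℂ, 0 < z.re → z.re < 1 →
      ‖∑' n : ℕ, circCoeff H n * (xiInv θ z) ^ n‖ ≤ M0 ^ (1 - z.re) * M1 ^ z.re := by
  intro z hz0 hz1
  have hs : 2 * π * θ ∈ Set.Icc 0 (2 * π) :=
    ⟨by nlinarith [Real.pi_pos, hθ.1], by nlinarith [Real.pi_pos, hθ.2]⟩
  refine norm_le_rpow_of_norm_le_affine (f := circSeries H ∘ xiInv θ) hM0 hM1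
    ((differentiableOn_circSeries H).comp (differentiableOn_xiInv hθ) fun w hw =>
      mem_ball_zero_iff.2 (norm_xiInv_lt_one hθ hw.1 hw.2)) ?_ ⟨hz0, hz1⟩
  rintro w ⟨hw0, hw1⟩
  have := norm_circSeries_le hint hneg hs hbd0 hbd1 (norm_xiInv_lt_one hθ hw0 hw1)
  rw [arcHarmonicMeasure_xiInv_left hθ hw0 hw1, arcHarmonicMeasure_xiInv_right hθ hw0 hw1] at this
  simp only [Function.comp_apply]
  linarith

/-- Part (vi) of the Poisson-series theorem: if `ĥ(n) = 0` for all `n < 0`,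
`|h| ≤ M₀` a.e. on the arc `Γ₀ = {e^{it} : 2πθ < t < 2π}` and `|h| ≤ M₁` a.e. on
`Γ₁ = {e^{it} : 0 < t < 2πθ}`, then the analytic function `u(w) = ∑_{n ≥ 0} ĥ(n) wⁿ`
satisfies `|u(ξ⁻¹(z))| ≤ M₀^{1 − Re z} M₁^{Re z}` on the open strip. -/
theorem poisson_series_three_lines
    (θ : ℝ) (hθ : θ ∈ Set.Ioo (0:ℝ) 1)
    (M0 M1 : ℝ) (hM0 : 0 < M0) (hM1 : 0 < M1)
    (H : ℝ → ℂ) (hper : Function.Periodic H (2 * π))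
    (hmeas : AEStronglyMeasurable H volume)
    (hint : IntervalIntegrable H volume 0 (2 * π))
    (hneg : ∀ n : ℤ, n < 0 → circCoeff H n = 0)
    (hbd0 : ∀ᵐ t ∂(volume.restrict (Set.Ioo (2 * π * θ) (2 * π))), ‖H t‖ ≤ M0)
    (hbd1 : ∀ᵐ t ∂(volume.restrict (Set.Ioo (0:ℝ) (2 * π * θ))), ‖H t‖ ≤ M1) :
    ∀ z : ℂ, 0 < z.re → z.re < 1 →
      ‖∑' n : ℕ, circCoeff H n * (xiInv θ z) ^ n‖ ≤ M0 ^ (1 - z.re) * M1 ^ z.re :=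
  poisson_series_three_lines_general θ hθ M0 M1 hM0 hM1 H hint hneg hbd0 hbd1
end

section
/- Let h ∈ H^∞(S°) be a bounded analytic function on the open unit strip. Then there exists φ : S → ℂ with: (i) |φ(z₁) − φ(z₂)| ≤ |z₁ − z₂| · sup_{ζ ∈ S°} |h(ζ)| for all z₁, z₂ ∈ S; (ii) φ is analytic in S° with φ′ = h there; (iii) |φ(j + it₁) − φ(j + it₂)| ≤ |t₁ − t₂| · lim_{r→0⁺} sup{|h(z)| : z ∈ S°, 0 < |Re z − j| < r} for j = 0,1 and all t₁, t₂ ∈ ℝ; (iv) |φ(z)| ≤ |z − 1/2| · sup_{ζ ∈ S°} |h(ζ)| for all z ∈ S. -/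
/-!
The antiderivative is `φ z = ∫_{1/2}^z h` along the straight segment from `1/2`. Inside the
strip it agrees with the wedge integral of `h` (horizontal, then vertical path from `1/2`):
since the strip contains every rectangle spanned by two of its points, Cauchy's theorem for
rectangles makes the wedge integral additive, and Morera's local argument shows that it is a
primitive of `h`. So `φ' = h` on the open strip, and the mean value inequality bounds the
variation of `φ` on convex subsets of the open strip by the supremum of `|h|` there: on the
whole strip for (i) and on vertical lines close to an edge for (iii). As `h` is bounded, `φ` is
continuous up to the boundary by dominated convergence, and both estimates pass to the closure.
-/

open Complex Set MeasureTheory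

theorem norm_sub_le_of_mem_closure {α E : Type*} [SeminormedAddCommGroup α]
    [SeminormedAddCommGroup E] {φ : α → E} {s : Set α} {K : ℝ}
    (hφ : ContinuousOn φ (closure s)) (h : ∀ x ∈ s, ∀ y ∈ s, ‖φ x - φ y‖ ≤ ‖x - y‖ * K)
    {x y : α} (hx : x ∈ closure s) (hy : y ∈ closure s) : ‖φ x - φ y‖ ≤ ‖x - y‖ * K := by
  have hxy : (x, y) ∈ closure (s ×ˢ s) := by rw [closure_prod_eq]; exact ⟨hx, hy⟩
  have h₁ : ContinuousWithinAt (fun p : α × α ↦ φ p.1) (s ×ˢ s) (x, y) :=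
    (hφ x hx).comp continuousWithinAt_fst fun p hp ↦ subset_closure hp.1
  have h₂ : ContinuousWithinAt (fun p : α × α ↦ φ p.2) (s ×ˢ s) (x, y) :=
    (hφ y hy).comp continuousWithinAt_snd fun p hp ↦ subset_closure hp.2
  exact ContinuousWithinAt.closure_le (f := fun p ↦ ‖φ p.1 - φ p.2‖) hxy (h₁.sub h₂).norm
    (by fun_prop : Continuous fun p : α × α ↦ ‖p.1 - p.2‖ * K).continuousWithinAt
    fun p hp ↦ h _ hp.1 _ hp.2

theorem le_mul_csInf {A : Set ℝ} {c d : ℝ} (hA : A.Nonempty) (hc : 0 ≤ c)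
    (h : ∀ M ∈ A, d ≤ c * M) : d ≤ c * sInf A := by
  rcases hc.eq_or_lt with rfl | hc
  · obtain ⟨M, hM⟩ := hA
    simpa using h M hM
  · rw [← div_le_iff₀' hc]
    exact le_csInf hA fun M hM ↦ (div_le_iff₀' hc).2 (h M hM)

namespace Complex

theorem rectangle_subset_preimage_re {s : Set ℝ} [s.OrdConnected] {z w : ℂ}
    (hz : z ∈ re ⁻¹' s) (hw : w ∈ re ⁻¹' s) : Rectangle z w ⊆ re ⁻¹' s :=
  fun _ hp ↦ ‹s.OrdConnected›.uIcc_subset (show z.re ∈ s from hz) (show w.re ∈ s from hw)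
    (mem_reProdIm.1 hp).1

variable {E : Type*} [NormedAddCommGroup E] {f : ℂ → E} {U : Set ℂ}

theorem intervalIntegrable_wedge {z w : ℂ} (hf : ContinuousOn f U) (hzw : Rectangle z w ⊆ U) :
    IntervalIntegrable (fun x : ℝ ↦ f (x + z.im * I)) volume z.re w.re ∧
      IntervalIntegrable (fun y : ℝ ↦ f (w.re + y * I)) volume z.im w.im := by
  constructor <;> refine (hf.comp (by fun_prop) fun t ht ↦ hzw ?_).intervalIntegrable <;>
    simp_all [Rectangle, mem_reProdIm]

variable [NormedSpace ℂ E]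

theorem wedgeIntegral_sub_wedgeIntegral (hU : ∀ z ∈ U, ∀ w ∈ U, Rectangle z w ⊆ U)
    (hf : DifferentiableOn ℂ f U) {c z w : ℂ} (hc : c ∈ U) (hz : z ∈ U) (hw : w ∈ U) :
    wedgeIntegral c w f - wedgeIntegral c z f = wedgeIntegral z w f := by
  set p : ℂ := w.re + z.im * I
  have hp : p ∈ U := hU z hz w hw (by simp [p, Rectangle, mem_reProdIm])
  have hpre : p.re = w.re := by simp [p]
  have hpim : p.im = z.im := by simp [p]
  have hint := fun a b ha hb ↦ intervalIntegrable_wedge hf.continuousOn (hU a ha b hb)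
  -- From `c` to `w` and to `p` the wedges share their horizontal side.
  have vertical : wedgeIntegral c w f - wedgeIntegral c p f =
      I • ∫ y in z.im..w.im, f (w.re + y * I) := by
    have hcp := (hint c p hc hp).2
    rw [hpre, hpim] at hcp
    have := intervalIntegral.integral_interval_sub_left (hint c w hc hw).2 hcp
    simp only [wedgeIntegral, hpre, hpim] at this ⊢
    rw [← this, smul_sub]
    abel
  -- Reversing the wedges to `p` and to `z` makes them share their vertical side.
  have horizontal : wedgeIntegral c p f - wedgeIntegral c z f =
      ∫ x in z.re..w.re, f (x + z.im * I) := by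
    have hzp := (hint z p hz hp).1
    have hpc := (hint p c hp hc).1
    rw [hpre] at hzp
    rw [hpre, hpim] at hpc
    have := intervalIntegral.integral_add_adjacent_intervals hzp hpc
    rw [hf.isConservativeOn c p (hU c hc p hp), hf.isConservativeOn c z (hU c hc z hz)]
    simp only [wedgeIntegral, hpre, hpim] at this ⊢
    rw [← this]
    abel
  rw [← sub_add_sub_cancel _ (wedgeIntegral c p f), vertical, horizontal, wedgeIntegral, add_comm]

theorem hasDerivAt_wedgeIntegral_of_rectangle_subset [CompleteSpace E] (hUo : IsOpen U)
    (hU : ∀ z ∈ U, ∀ w ∈ U, Rectangle z w ⊆ U) (hf : DifferentiableOn ℂ f U) {c z : ℂ}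
    (hc : c ∈ U) (hz : z ∈ U) : HasDerivAt (wedgeIntegral c · f) (f z) z := by
  obtain ⟨r, hr, hball⟩ := Metric.isOpen_iff.mp hUo z hz
  have hloc := (hf.mono hball).isConservativeOn.hasDerivAt_wedgeIntegral
    (hf.continuousOn.mono hball) (Metric.mem_ball_self hr)
  refine (hloc.const_add (wedgeIntegral c z f)).congr_of_eventuallyEq ?_
  filter_upwards [hUo.mem_nhds hz] with w hw
  rw [← wedgeIntegral_sub_wedgeIntegral hU hf hc hz hw, add_sub_cancel]

noncomputable def segmentIntegral (f : ℂ → E) (c z : ℂ) : E :=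
  ∫ t in (0 : ℝ)..1, (z - c) • f (c + t • (z - c))

@[simp]
theorem segmentIntegral_self (f : ℂ → E) (c : ℂ) : segmentIntegral f c c = 0 := by
  simp [segmentIntegral]

theorem segmentIntegral_eq_sub [CompleteSpace E] {F : ℂ → E} {c z : ℂ} (hU : StarConvex ℝ c U)
    (hF : ∀ w ∈ U, HasDerivAt F (f w) w) (hf : ContinuousOn f U) (hz : z ∈ U) :
    segmentIntegral f c z = F z - F c := by
  have hseg : ∀ t ∈ uIcc (0 : ℝ) 1, c + t • (z - c) ∈ U := fun t ht ↦ by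
    rw [uIcc_of_le zero_le_one] at ht
    exact hU.add_smul_sub_mem hz ht.1 ht.2
  have hpath (t : ℝ) : HasDerivAt (fun s : ℝ ↦ c + s • (z - c)) (z - c) t := by
    simpa using ((hasDerivAt_id t).smul_const (z - c)).const_add c
  have hderiv : ∀ t ∈ uIcc (0 : ℝ) 1,
      HasDerivAt (fun s : ℝ ↦ F (c + s • (z - c))) ((z - c) • f (c + t • (z - c))) t :=
    fun t ht ↦ (hF _ (hseg t ht)).scomp t (hpath t)
  have hint : IntervalIntegrable (fun t : ℝ ↦ (z - c) • f (c + t • (z - c))) volume 0 1 :=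
    (continuousOn_const.smul (hf.comp (by fun_prop) hseg)).intervalIntegrable
  simpa [segmentIntegral] using intervalIntegral.integral_eq_sub_of_hasDerivAt hderiv hint

theorem continuousOn_segmentIntegral {c : ℂ} {B : ℝ} (hUo : IsOpen U) (hU : Convex ℝ U)
    (hc : c ∈ U) (hf : ContinuousOn f U) (hB : ∀ w ∈ U, ‖f w‖ ≤ B) :
    ContinuousOn (segmentIntegral f c) (closure U) := by
  have hseg : ∀ z ∈ closure U, ∀ t ∈ Ico (0 : ℝ) 1, c + t • (z - c) ∈ U := fun z hz t ht ↦ by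
    have := hU.add_smul_sub_mem_interior' hz (hUo.interior_eq.symm ▸ hc)
      (t := 1 - t) ⟨by linarith [ht.2], by linarith [ht.1]⟩
    rw [hUo.interior_eq] at this
    convert this using 1
    module
  -- For `z` on the boundary the integrand is only controlled for `t ≠ 1`, a null set.
  have hne : ∀ᵐ t : ℝ, t ≠ 1 := by simp [ae_iff]
  have hB0 : 0 ≤ B := (norm_nonneg _).trans (hB c hc)
  intro z₀ hz₀
  refine intervalIntegral.continuousWithinAt_of_dominated_interval
    (bound := fun _ ↦ (‖z₀ - c‖ + 1) * B) ?_ ?_ intervalIntegrable_const ?_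
  · filter_upwards [self_mem_nhdsWithin] with z hz
    rw [uIoc_of_le zero_le_one, Measure.restrict_congr_set Ioo_ae_eq_Ioc.symm]
    exact (continuousOn_const.smul (hf.comp (by fun_prop) fun t ht ↦
      hseg z hz t ⟨ht.1.le, ht.2⟩)).aestronglyMeasurable measurableSet_Ioo
  · filter_upwards [inter_mem_nhdsWithin _ (Metric.ball_mem_nhds z₀ one_pos)]
      with z ⟨hz, hzz₀⟩
    filter_upwards [hne] with t ht1 ht
    rw [uIoc_of_le zero_le_one] at ht
    rw [Metric.mem_ball, dist_eq_norm] at hzz₀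
    rw [norm_smul]
    gcongr
    · linarith [norm_sub_le_norm_sub_add_norm_sub z z₀ c]
    · exact hB _ (hseg z hz t ⟨ht.1.le, lt_of_le_of_ne ht.2 ht1⟩)
  · filter_upwards [hne] with t ht1 ht
    rw [uIoc_of_le zero_le_one] at ht
    have hmem : c + t • (z₀ - c) ∈ U := hseg z₀ hz₀ t ⟨ht.1.le, lt_of_le_of_ne ht.2 ht1⟩
    have hfz : ContinuousAt (fun z ↦ f (c + t • (z - c))) z₀ :=
      (hf.continuousAt (hUo.mem_nhds hmem)).comp (g := f) (f := fun z ↦ c + t • (z - c))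
        (by fun_prop)
    exact ((continuousAt_id.sub continuousAt_const).smul hfz).continuousWithinAt

theorem hasDerivAt_segmentIntegral [CompleteSpace E] {s : Set ℝ} [s.OrdConnected]
    (hs : IsOpen s) (hf : DifferentiableOn ℂ f (re ⁻¹' s)) {c z : ℂ} (hc : c ∈ re ⁻¹' s)
    (hz : z ∈ re ⁻¹' s) : HasDerivAt (segmentIntegral f c) (f z) z := by
  have hUo : IsOpen (re ⁻¹' s) := hs.preimage continuous_re
  have hU : Convex ℝ (re ⁻¹' s) := (Set.OrdConnected.convex ‹_›).linear_preimage reLm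
  have hF : ∀ w ∈ re ⁻¹' s, HasDerivAt (wedgeIntegral c · f) (f w) w := fun _ ↦
    hasDerivAt_wedgeIntegral_of_rectangle_subset hUo (fun _ h₁ _ h₂ ↦
      rectangle_subset_preimage_re h₁ h₂) hf hc
  refine (hF z hz).congr_of_eventuallyEq ?_
  filter_upwards [hUo.mem_nhds hz] with w hw
  rw [segmentIntegral_eq_sub (hU.starConvex hc) hF hf.continuousOn hw]
  simp [wedgeIntegral]

theorem norm_sub_le_on_vertical_line {φ f : ℂ → E} {a b j r M : ℝ} (hab : a < b)
    (hj : j ∈ Icc a b) (hr : 0 < r) (hφ : ContinuousOn φ (re ⁻¹' Icc a b))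
    (hφ' : ∀ z ∈ re ⁻¹' Ioo a b, HasDerivAt φ (f z) z)
    (hM : ∀ z : ℂ, a < z.re → z.re < b → |z.re - j| < r → ‖f z‖ ≤ M) (t₁ t₂ : ℝ) :
    ‖φ (j + t₁ * I) - φ (j + t₂ * I)‖ ≤ |t₁ - t₂| * M := by
  set s := Ioo (max a (j - r)) (min b (j + r))
  have hjs : j ∈ closure s := by
    rw [closure_Ioo]
    · exact ⟨max_le hj.1 (by linarith), le_min hj.2 (by linarith)⟩
    · exact (max_lt (lt_min hab (by linarith [hj.1]))
        (lt_min (by linarith [hj.2]) (by linarith))).ne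
  have hsub : s ⊆ Icc a b :=
    Ioo_subset_Icc_self.trans (Icc_subset_Icc (le_max_left _ _) (min_le_left _ _))
  have hline (t : ℝ) : ContinuousWithinAt (fun x : ℝ ↦ φ (x + t * I)) s j :=
    (hφ _ (by simpa using hj)).comp
      (by fun_prop : Continuous fun x : ℝ ↦ (x : ℂ) + t * I).continuousWithinAt
      fun x hx ↦ by simpa using hsub hx
  refine ContinuousWithinAt.closure_le hjs ((hline t₁).sub (hline t₂)).norm
    continuousWithinAt_const fun x hx ↦ ?_
  simp only [s, mem_Ioo, max_lt_iff, lt_min_iff] at hx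
  have hL : Convex ℝ (re ⁻¹' {x}) := (convex_singleton x).linear_preimage reLm
  have hLS : re ⁻¹' {x} ⊆ re ⁻¹' Ioo a b :=
    preimage_mono (singleton_subset_iff.2 ⟨hx.1.1, hx.2.1⟩)
  have hLM : ∀ z ∈ re ⁻¹' {x}, ‖f z‖ ≤ M := fun z hz ↦ by
    rw [mem_preimage, mem_singleton_iff] at hz
    exact hM z (by linarith) (by linarith) (abs_sub_lt_iff.2 ⟨by linarith, by linarith⟩)
  have := hL.norm_image_sub_le_of_norm_hasDerivWithin_le
    (fun z hz ↦ (hφ' z (hLS hz)).hasDerivWithinAt) hLM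
    (show (↑x + ↑t₂ * I).re = x by simp) (show (↑x + ↑t₁ * I).re = x by simp)
  show ‖φ (x + t₁ * I) - φ (x + t₂ * I)‖ ≤ |t₁ - t₂| * M
  rwa [add_sub_add_left_eq_sub, ← sub_mul, ← ofReal_sub, norm_mul, norm_I, norm_real,
    Real.norm_eq_abs, mul_one, mul_comm M] at this

end Complex

/-- Lemma on antiderivatives of bounded analytic functions on the open unit strip
`S° = {z : 0 < Re z < 1}`: for `h ∈ H^∞(S°)` there is `φ : S → ℂ` which is Lipschitz on
the closed strip with constant `sup_{S°} |h|`, analytic in `S°` with `φ' = h`, Lipschitz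
on each boundary line with constant `lim_{r→0⁺} sup {|h z| : 0 < |Re z − j| < r}`, and
satisfies `|φ z| ≤ |z − 1/2| · sup_{S°} |h|`. -/
theorem antiderivative_on_strip
    (h : ℂ → ℂ)
    (hanal : DifferentiableOn ℂ h {z : ℂ | 0 < z.re ∧ z.re < 1})
    (hbdd : ∃ B : ℝ, ∀ z : ℂ, 0 < z.re → z.re < 1 → ‖h z‖ ≤ B) :
    ∃ φ : ℂ → ℂ,
      (∀ z1 z2 : ℂ, 0 ≤ z1.re → z1.re ≤ 1 → 0 ≤ z2.re → z2.re ≤ 1 →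
        ‖φ z1 - φ z2‖ ≤ ‖z1 - z2‖ *
          sSup ((fun ζ => ‖h ζ‖) '' {z : ℂ | 0 < z.re ∧ z.re < 1})) ∧
      (∀ z : ℂ, 0 < z.re → z.re < 1 → HasDerivAt φ (h z) z) ∧
      (∀ t1 t2 : ℝ, ‖φ (t1 * I) - φ (t2 * I)‖ ≤ |t1 - t2| *
        sInf {M | ∃ r > (0:ℝ), ∀ z : ℂ, 0 < z.re → z.re < 1 →
          |z.re - 0| < r → ‖h z‖ ≤ M}) ∧
      (∀ t1 t2 : ℝ, ‖φ (1 + t1 * I) - φ (1 + t2 * I)‖ ≤ |t1 - t2| *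
        sInf {M | ∃ r > (0:ℝ), ∀ z : ℂ, 0 < z.re → z.re < 1 →
          |z.re - 1| < r → ‖h z‖ ≤ M}) ∧
      (∀ z : ℂ, 0 ≤ z.re → z.re ≤ 1 → ‖φ z‖ ≤ ‖z - 1/2‖ *
        sSup ((fun ζ => ‖h ζ‖) '' {z : ℂ | 0 < z.re ∧ z.re < 1})) := by
  obtain ⟨B, hB⟩ := hbdd
  set S : Set ℂ := {z : ℂ | 0 < z.re ∧ z.re < 1}
  have hSc : Convex ℝ S := (convex_Ioo 0 1).linear_preimage reLm
  have hSbar : closure S = re ⁻¹' Icc 0 1 := by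
    rw [show S = re ⁻¹' Ioo 0 1 from rfl, closure_preimage_re, closure_Ioo zero_ne_one]
  have hhalf : (1 / 2 : ℂ) ∈ S := by norm_num [S]
  set K := sSup ((fun ζ ↦ ‖h ζ‖) '' S)
  have hK : ∀ z ∈ S, ‖h z‖ ≤ K := fun z hz ↦
    le_csSup ⟨B, by rintro _ ⟨ζ, hζ, rfl⟩; exact hB ζ hζ.1 hζ.2⟩ ⟨z, hz, rfl⟩
  set φ := segmentIntegral h (1 / 2) with hφdef
  have hφ' : ∀ z ∈ S, HasDerivAt φ (h z) z := fun _ ↦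
    hasDerivAt_segmentIntegral isOpen_Ioo hanal hhalf
  have hφ : ContinuousOn φ (closure S) :=
    continuousOn_segmentIntegral (isOpen_Ioo.preimage continuous_re) hSc hhalf hanal.continuousOn hK
  have hlip : ∀ z₁ ∈ re ⁻¹' Icc 0 1, ∀ z₂ ∈ re ⁻¹' Icc 0 1, ‖φ z₁ - φ z₂‖ ≤ ‖z₁ - z₂‖ * K := by
    rw [← hSbar]
    refine fun z₁ h₁ z₂ h₂ ↦ norm_sub_le_of_mem_closure hφ (fun z₁ h₁ z₂ h₂ ↦ ?_) h₁ h₂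
    rw [mul_comm]
    exact hSc.norm_image_sub_le_of_norm_hasDerivWithin_le
      (fun z hz ↦ (hφ' z hz).hasDerivWithinAt) hK h₂ h₁
  have hedge : ∀ j ∈ Icc (0 : ℝ) 1, ∀ t₁ t₂ : ℝ, ‖φ (j + t₁ * I) - φ (j + t₂ * I)‖ ≤
      |t₁ - t₂| * sInf {M | ∃ r > (0 : ℝ), ∀ z : ℂ, 0 < z.re → z.re < 1 →
        |z.re - j| < r → ‖h z‖ ≤ M} := fun j hj t₁ t₂ ↦
    le_mul_csInf ⟨B, 1, one_pos, fun z h₀ h₁ _ ↦ hB z h₀ h₁⟩ (abs_nonneg _) fun M ⟨r, hr, hM⟩ ↦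
      norm_sub_le_on_vertical_line zero_lt_one hj hr (hSbar ▸ hφ) hφ' hM t₁ t₂
  refine ⟨φ, fun z₁ z₂ a₁ b₁ a₂ b₂ ↦ hlip z₁ ⟨a₁, b₁⟩ z₂ ⟨a₂, b₂⟩, fun z h₀ h₁ ↦ hφ' z ⟨h₀, h₁⟩,
    by simpa using hedge 0 (by norm_num), by simpa using hedge 1 (by norm_num),
    fun z h₀ h₁ ↦ ?_⟩
  have := hlip z ⟨h₀, h₁⟩ (1 / 2) (by norm_num)
  rwa [hφdef, segmentIntegral_self, sub_zero] at this
end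

section
/- Let θ ∈ (0,1). Suppose ψ : 𝔻 → ℂ is continuous on the closed unit disk, analytic in its interior, and ψ(1) = ψ(e^{i2πθ}) = 0. Then |ψ(0)| ≤ ((1/(2π(1−θ))) ∫_{2πθ}^{2π} |ψ(e^{it})| dt)^{1−θ} · ((1/(2πθ)) ∫₀^{2πθ} |ψ(e^{it})| dt)^{θ}. -/
open Complex Set
open scoped Real

/-!
Multiply `ψ` by `exp (i s (log (1 - z) - log (1 - ω⁻¹ z)) / π)`, where `ω = e^{2πiθ}`. This
factor is holomorphic in the disc, equals `1` at `0`, and has modulus `e^{s(1-θ)}` on the arc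
from `1` to `ω` and `e^{-sθ}` on the complementary arc. It is bounded, so the product is still
continuous on the closed disc because `ψ` vanishes at the two jumps `1` and `ω`. The mean value
inequality for the product bounds `|ψ(0)|` by `θ e^{s(1-θ)} B + (1-θ) e^{-sθ} A`, where `B` and
`A` are the two arc averages of `|ψ|`, and minimising over `s` gives `A^{1-θ} B^θ`.
-/

namespace Complex

theorem one_sub_exp_mul_I_eq (t : ℝ) :
    1 - exp (t * I) = (2 * Real.sin (t / 2) : ℝ) * exp (((t - π) / 2 : ℝ) * I) := by
  have hsq : exp (t * I) = exp (↑(t / 2) * I) ^ 2 := by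
    rw [← exp_nat_mul]; push_cast; ring_nf
  have hshift : exp (((t - π) / 2 : ℝ) * I) = exp (↑(t / 2) * I) * -I := by
    rw [show (((t - π) / 2 : ℝ) : ℂ) * I = ↑(t / 2) * I - π / 2 * I by push_cast; ring,
      exp_sub, exp_pi_div_two_mul_I, div_I, mul_neg]
  have hsin : ((2 * Real.sin (t / 2) : ℝ) : ℂ)
      = (exp (-(↑(t / 2) * I)) - exp (↑(t / 2) * I)) * I := by
    push_cast; rw [Complex.sin]; ring_nf
  rw [hsin, hshift, hsq, exp_neg]
  field_simp
  linear_combination (1 - exp (↑(t / 2) * I) ^ 2) * I_sq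

theorem arg_one_sub_exp_mul_I {t : ℝ} (ht : t ∈ Ioo 0 (2 * π)) :
    arg (1 - exp (t * I)) = (t - π) / 2 := by
  obtain ⟨ht0, ht2π⟩ := ht
  have hsin : 0 < Real.sin (t / 2) := Real.sin_pos_of_pos_of_lt_pi (by positivity) (by linarith)
  rw [one_sub_exp_mul_I_eq, exp_mul_I,
    arg_mul_cos_add_sin_mul_I (by positivity) ⟨by linarith, by linarith⟩]

theorem one_sub_mem_slitPlane {z : ℂ} (hz : ‖z‖ ≤ 1) (h1 : z ≠ 1) : 1 - z ∈ slitPlane := by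
  rw [mem_slitPlane_iff_not_le_zero, le_def]
  rintro ⟨hre, him⟩
  simp only [sub_re, one_re, zero_re, sub_im, one_im, zero_im] at hre him
  have : z.re ≤ 1 := (re_le_norm z).trans hz
  exact h1 (ext (by rw [one_re]; linarith) (by rw [one_im]; linarith))

theorem inv_exp_mul_I_mul_exp_mul_I (a t : ℝ) :
    (exp (a * I))⁻¹ * exp (t * I) = exp (↑(t - a) * I) := by
  rw [← exp_neg, ← exp_add]; push_cast; ring_nf

end Complex

theorem ContinuousWithinAt.mul_of_eq_zero_of_norm_le {X R : Type*} [TopologicalSpace X]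
    [NonUnitalSeminormedRing R] {f g : X → R} {s : Set X} {x : X} {C : ℝ}
    (hf : ContinuousWithinAt f s x) (hfx : f x = 0) (hg : ∀ y, ‖g y‖ ≤ C) :
    ContinuousWithinAt (fun y ↦ f y * g y) s x := by
  rw [ContinuousWithinAt, hfx] at hf ⊢
  rw [zero_mul]
  exact hf.zero_mul_isBoundedUnder_le (Filter.isBoundedUnder_of ⟨C, hg⟩)

theorem DiffContOnCl.norm_le_circleAverage_norm {E : Type*} [NormedAddCommGroup E]
    [NormedSpace ℂ E] [CompleteSpace E] {f : ℂ → E} {c : ℂ} {R : ℝ}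
    (hf : DiffContOnCl ℂ f (Metric.ball c |R|)) :
    ‖f c‖ ≤ Real.circleAverage (‖f ·‖) c R := by
  rw [← hf.circleAverage, Real.circleAverage_def, Real.circleAverage_def, norm_smul,
    Real.norm_eq_abs, abs_inv, abs_of_pos Real.two_pi_pos, smul_eq_mul]
  gcongr
  exact intervalIntegral.norm_integral_le_integral_norm Real.two_pi_pos.le

noncomputable def arcWeight (θ s : ℝ) (z : ℂ) : ℂ :=
  exp (s / π * I * (log (1 - z) - log (1 - (exp (↑(2 * π * θ) * I))⁻¹ * z)))

theorem arcWeight_zero (θ s : ℝ) : arcWeight θ s 0 = 1 := by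
  simp [arcWeight]

theorem norm_arcWeight (θ s : ℝ) (z : ℂ) :
    ‖arcWeight θ s z‖ =
      Real.exp (s / π * (arg (1 - (exp (↑(2 * π * θ) * I))⁻¹ * z) - arg (1 - z))) := by
  rw [arcWeight, norm_exp]
  congr 1
  simp only [mul_re, mul_im, div_ofReal_re, div_ofReal_im, ofReal_re, ofReal_im, I_re, I_im,
    sub_re, sub_im, log_im]
  ring

theorem norm_arcWeight_le (θ s : ℝ) (z : ℂ) : ‖arcWeight θ s z‖ ≤ Real.exp (2 * |s|) := by
  rw [norm_arcWeight, Real.exp_le_exp]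
  set δ := arg (1 - (exp (↑(2 * π * θ) * I))⁻¹ * z) - arg (1 - z)
  have hδ : |δ| ≤ 2 * π := (abs_sub _ _).trans <| by
    linarith [abs_arg_le_pi (1 - (exp (↑(2 * π * θ) * I))⁻¹ * z), abs_arg_le_pi (1 - z)]
  calc s / π * δ ≤ |s / π * δ| := le_abs_self _
    _ = |s| / π * |δ| := by rw [abs_mul, abs_div, abs_of_pos Real.pi_pos]
    _ ≤ |s| / π * (2 * π) := by gcongr
    _ = 2 * |s| := by field_simp

theorem differentiableAt_arcWeight {θ s : ℝ} {z : ℂ} (hz : ‖z‖ ≤ 1) (h1 : z ≠ 1)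
    (hω : z ≠ exp (↑(2 * π * θ) * I)) : DifferentiableAt ℂ (arcWeight θ s) z := by
  have hω₁ : (exp (↑(2 * π * θ) * I))⁻¹ * z ≠ 1 := by
    rwa [ne_eq, inv_mul_eq_one₀ (exp_ne_zero _), eq_comm]
  have hωz : ‖(exp (↑(2 * π * θ) * I))⁻¹ * z‖ ≤ 1 := by
    rwa [norm_mul, norm_inv, norm_exp_ofReal_mul_I, inv_one, one_mul]
  have hslit := one_sub_mem_slitPlane hz h1
  have hslitω := one_sub_mem_slitPlane hωz hω₁
  unfold arcWeight
  fun_prop (disch := assumption)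

theorem norm_arcWeight_exp_mul_I_of_lt {θ s t : ℝ} (hθ : θ < 1)
    (ht : t ∈ Ioo 0 (2 * π * θ)) :
    ‖arcWeight θ s (exp (t * I))‖ = Real.exp (s * (1 - θ)) := by
  obtain ⟨ht0, htθ⟩ := ht
  have hθπ : 2 * π * θ < 2 * π := by nlinarith [Real.pi_pos]
  have hshift : exp (↑(t - 2 * π * θ) * I) = exp (↑(t - 2 * π * θ + 2 * π) * I) := by
    rw [ofReal_add, add_mul, exp_add, ofReal_mul, ofReal_ofNat, exp_two_pi_mul_I, mul_one]
  rw [norm_arcWeight, inv_exp_mul_I_mul_exp_mul_I, hshift,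
    arg_one_sub_exp_mul_I ⟨by linarith, by linarith⟩,
    arg_one_sub_exp_mul_I ⟨ht0, htθ.trans hθπ⟩]
  congr 1
  field_simp
  ring

theorem norm_arcWeight_exp_mul_I_of_gt {θ s t : ℝ} (hθ : 0 < θ)
    (ht : t ∈ Ioo (2 * π * θ) (2 * π)) :
    ‖arcWeight θ s (exp (t * I))‖ = Real.exp (-(s * θ)) := by
  obtain ⟨htθ, ht2π⟩ := ht
  have hπθ : 0 < 2 * π * θ := by positivity
  rw [norm_arcWeight, inv_exp_mul_I_mul_exp_mul_I,
    arg_one_sub_exp_mul_I ⟨by linarith, by linarith⟩,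
    arg_one_sub_exp_mul_I ⟨by linarith, ht2π⟩]
  congr 1
  field_simp
  ring

theorem diffContOnCl_mul_arcWeight {θ : ℝ} {ψ : ℂ → ℂ}
    (hcont : ContinuousOn ψ (Metric.closedBall 0 1))
    (hanal : DifferentiableOn ℂ ψ (Metric.ball 0 1))
    (h1 : ψ 1 = 0) (h2 : ψ (exp (↑(2 * π * θ) * I)) = 0) (s : ℝ) :
    DiffContOnCl ℂ (fun z ↦ ψ z * arcWeight θ s z) (Metric.ball 0 1) := by
  refine ⟨fun z hz ↦ ?_, ?_⟩
  · have hz' : ‖z‖ < 1 := mem_ball_zero_iff.mp hz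
    have hz1 : z ≠ 1 := by rintro rfl; simp at hz'
    have hzω : z ≠ exp (↑(2 * π * θ) * I) := by
      rintro rfl; rw [norm_exp_ofReal_mul_I] at hz'; exact lt_irrefl _ hz'
    exact (hanal z hz).mul (differentiableAt_arcWeight hz'.le hz1 hzω).differentiableWithinAt
  · rw [closure_ball _ one_ne_zero]
    intro z hz
    by_cases hsing : z = 1 ∨ z = exp (↑(2 * π * θ) * I)
    · have hψ : ψ z = 0 := by rcases hsing with rfl | rfl <;> assumption
      exact (hcont z hz).mul_of_eq_zero_of_norm_le hψ (norm_arcWeight_le θ s)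
    · push Not at hsing
      exact (hcont z hz).mul (differentiableAt_arcWeight (mem_closedBall_zero_iff.mp hz)
        hsing.1 hsing.2).continuousAt.continuousWithinAt

theorem norm_le_arcWeight_integrals {θ : ℝ} {ψ : ℂ → ℂ}
    (hcont : ContinuousOn ψ (Metric.closedBall 0 1))
    (hanal : DifferentiableOn ℂ ψ (Metric.ball 0 1))
    (h1 : ψ 1 = 0) (h2 : ψ (exp (↑(2 * π * θ) * I)) = 0) (hθ : θ ∈ Ioo 0 1) (s : ℝ) :
    ‖ψ 0‖ ≤ (2 * π)⁻¹ *
      (Real.exp (s * (1 - θ)) * (∫ t in (0 : ℝ)..(2 * π * θ), ‖ψ (exp (t * I))‖) +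
        Real.exp (-(s * θ)) * ∫ t in (2 * π * θ)..(2 * π), ‖ψ (exp (t * I))‖) := by
  obtain ⟨hθ0, hθ1⟩ := hθ
  have hF := diffContOnCl_mul_arcWeight hcont hanal h1 h2 s
  set F := fun z ↦ ψ z * arcWeight θ s z
  have hmean : ‖ψ 0‖ ≤ Real.circleAverage (‖F ·‖) 0 1 := calc
    ‖ψ 0‖ = ‖F 0‖ := by simp only [F, arcWeight_zero, mul_one]
    _ ≤ _ := DiffContOnCl.norm_le_circleAverage_norm (R := 1) (by rwa [abs_one])
  have hFcont : Continuous fun t : ℝ ↦ ‖F (circleMap 0 1 t)‖ :=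
    (hF.continuousOn_ball.comp_continuous (continuous_circleMap 0 1)
      (circleMap_mem_closedBall 0 zero_le_one)).norm
  have hleft : ∫ t in (0 : ℝ)..(2 * π * θ), ‖F (circleMap 0 1 t)‖ =
      Real.exp (s * (1 - θ)) * ∫ t in (0 : ℝ)..(2 * π * θ), ‖ψ (exp (t * I))‖ := by
    rw [← intervalIntegral.integral_const_mul]
    refine intervalIntegral.integral_congr_Ioo_of_le (by positivity) fun t ht ↦ ?_
    rw [circleMap_zero, ofReal_one, one_mul, norm_mul, norm_arcWeight_exp_mul_I_of_lt hθ1 ht,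
      mul_comm]
  have hright : ∫ t in (2 * π * θ)..(2 * π), ‖F (circleMap 0 1 t)‖ =
      Real.exp (-(s * θ)) * ∫ t in (2 * π * θ)..(2 * π), ‖ψ (exp (t * I))‖ := by
    rw [← intervalIntegral.integral_const_mul]
    refine intervalIntegral.integral_congr_Ioo_of_le (by nlinarith [Real.pi_pos]) fun t ht ↦ ?_
    rw [circleMap_zero, ofReal_one, one_mul, norm_mul, norm_arcWeight_exp_mul_I_of_gt hθ0 ht,
      mul_comm]
  rwa [Real.circleAverage_def, smul_eq_mul, ← intervalIntegral.integral_add_adjacent_intervals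
    (hFcont.intervalIntegrable 0 (2 * π * θ)) (hFcont.intervalIntegrable _ (2 * π)),
    hleft, hright] at hmean

theorem le_rpow_mul_rpow_of_forall_le {θ a b c : ℝ} (hθ : θ ∈ Ioo 0 1) (ha : 0 ≤ a)
    (hb : 0 ≤ b)
    (h : ∀ s : ℝ, c ≤ θ * Real.exp (s * (1 - θ)) * b + (1 - θ) * Real.exp (-(s * θ)) * a) :
    c ≤ a ^ (1 - θ) * b ^ θ := by
  obtain ⟨hθ0, hθ1⟩ := hθ
  have hpos : ∀ ε > 0, c ≤ (a + ε) ^ (1 - θ) * (b + ε) ^ θ := by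
    intro ε hε
    have hx : 0 < a + ε := by positivity
    have hy : 0 < b + ε := by positivity
    have hgeom : (a + ε) ^ (1 - θ) * (b + ε) ^ θ =
        Real.exp ((1 - θ) * Real.log (a + ε) + θ * Real.log (b + ε)) := by
      rw [Real.rpow_def_of_pos hx, Real.rpow_def_of_pos hy, ← Real.exp_add]
      ring_nf
    -- the minimising `s`, at which both terms equal the geometric mean
    set s := Real.log (a + ε) - Real.log (b + ε) with hs
    have e₁ : Real.exp (s * (1 - θ)) * (b + ε) = (a + ε) ^ (1 - θ) * (b + ε) ^ θ := by
      rw [hgeom, show (1 - θ) * Real.log (a + ε) + θ * Real.log (b + ε) =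
        s * (1 - θ) + Real.log (b + ε) by rw [hs]; ring, Real.exp_add, Real.exp_log hy]
    have e₂ : Real.exp (-(s * θ)) * (a + ε) = (a + ε) ^ (1 - θ) * (b + ε) ^ θ := by
      rw [hgeom, show (1 - θ) * Real.log (a + ε) + θ * Real.log (b + ε) =
        -(s * θ) + Real.log (a + ε) by rw [hs]; ring, Real.exp_add, Real.exp_log hx]
    calc c ≤ θ * Real.exp (s * (1 - θ)) * b + (1 - θ) * Real.exp (-(s * θ)) * a := h s
      _ ≤ θ * Real.exp (s * (1 - θ)) * (b + ε) + (1 - θ) * Real.exp (-(s * θ)) * (a + ε) := by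
        gcongr <;> linarith
      _ = (a + ε) ^ (1 - θ) * (b + ε) ^ θ := by rw [mul_assoc, e₁, mul_assoc, e₂]; ring
  have hcont : Continuous fun ε : ℝ ↦ (a + ε) ^ (1 - θ) * (b + ε) ^ θ :=
    ((continuous_const.add continuous_id).rpow_const fun _ ↦ Or.inr (by linarith)).mul
      ((continuous_const.add continuous_id).rpow_const fun _ ↦ Or.inr hθ0.le)
  have hlim := (hcont.tendsto 0).mono_left (nhdsWithin_le_nhds (s := Ioi 0))
  simp only [add_zero] at hlim
  exact ge_of_tendsto hlim (eventually_nhdsWithin_of_forall hpos)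

/-- Corollary of the Jensen-type inequality: if `ψ` is continuous on the closed unit
disk, analytic in its interior, and `ψ(1) = ψ(e^{2πθi}) = 0` for some `θ ∈ (0,1)`, then
`|ψ(0)| ≤ ((1/(2π(1−θ))) ∫_{2πθ}^{2π} |ψ(e^{it})| dt)^{1−θ} ·
((1/(2πθ)) ∫₀^{2πθ} |ψ(e^{it})| dt)^{θ}`. -/
theorem jensen_corollary_disk
    (θ : ℝ) (hθ : θ ∈ Ioo (0:ℝ) 1)
    (ψ : ℂ → ℂ)
    (hcont : ContinuousOn ψ (Metric.closedBall (0:ℂ) 1))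
    (hanal : DifferentiableOn ℂ ψ (Metric.ball (0:ℂ) 1))
    (h1 : ψ 1 = 0) (h2 : ψ (Complex.exp ((2 * π * θ : ℝ) * I)) = 0) :
    ‖ψ 0‖ ≤
      ((1 / (2 * π * (1 - θ))) * ∫ t in (2 * π * θ)..(2 * π),
          ‖ψ (Complex.exp ((t:ℝ) * I))‖) ^ (1 - θ) *
        ((1 / (2 * π * θ)) * ∫ t in (0:ℝ)..(2 * π * θ),
          ‖ψ (Complex.exp ((t:ℝ) * I))‖) ^ θ := by
  obtain ⟨hθ0, hθ1⟩ := hθ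
  have hθπ : 2 * π * θ < 2 * π := by nlinarith [Real.pi_pos]
  have h1θ : 0 < 1 - θ := by linarith
  have hkey := norm_le_arcWeight_integrals hcont hanal h1 h2 ⟨hθ0, hθ1⟩
  set J₁ := ∫ t in (0 : ℝ)..(2 * π * θ), ‖ψ (exp (t * I))‖
  set J₂ := ∫ t in (2 * π * θ)..(2 * π), ‖ψ (exp (t * I))‖
  have hJ₁ : 0 ≤ J₁ := intervalIntegral.integral_nonneg (by positivity) fun _ _ ↦ norm_nonneg _
  have hJ₂ : 0 ≤ J₂ := intervalIntegral.integral_nonneg hθπ.le fun _ _ ↦ norm_nonneg _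
  refine le_rpow_mul_rpow_of_forall_le ⟨hθ0, hθ1⟩ (by positivity) (by positivity)
    fun s ↦ (hkey s).trans_eq ?_
  field_simp
end
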